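/- arXiv:1903.01518 — 9 statements merged into one kernel-verified Lean document; each statement's English description precedes it below -/
import Mathlib

section
/- Let p be an odd prime and w : F_p^2 → ℝ. If for every affine line l in F_p^2 one has ∑_{z∈l} w(z) = (1/p)·∑_{z∈F_p^2} w(z), then w is constant. -/
open scoped Classical

/-- A direction (one-dimensional subspace `H` of `F_p^2`) is *perfect* with respect to
`w : F_p^2 → ℝ` if every line in this direction (coset of `H`) has `w`-sum equal to
`(1/p)` times the total `w`-sum. -/
def IsPerfect (p : ℕ) [NeZero p] (w : ZMod p × ZMod p → ℝ)
    (H : Submodule (ZMod p) (ZMod p × ZMod p)) : Prop :=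
  ∀ a : ZMod p × ZMod p,
    ∑ h : H, w (a + (h : ZMod p × ZMod p)) = (∑ z : ZMod p × ZMod p, w z) / p

theorem stmt0 (p : ℕ) (hp : p.Prime) (hodd : Odd p) [NeZero p]
    (w : ZMod p × ZMod p → ℝ)
    (hperf : ∀ H : Submodule (ZMod p) (ZMod p × ZMod p),
      Module.finrank (ZMod p) H = 1 → IsPerfect p w H) :
    ∃ c : ℝ, ∀ z : ZMod p × ZMod p, w z = c := by
  haveI : Fact p.Prime := ⟨hp⟩
  set T := ∑ z : ZMod p × ZMod p, w z with hT
  refine ⟨T / (p:ℝ)^2, fun z => ?_⟩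
  -- sum of w over each line through z is T/p
  have key : ∀ v : ZMod p × ZMod p, v ≠ 0 →
      ∑ c : ZMod p, w (z + c • v) = T / p := by
    intro v hv
    have h1 : Module.finrank (ZMod p) (Submodule.span (ZMod p) {v}) = 1 :=
      finrank_span_singleton hv
    have h2 := hperf _ h1 z
    rw [← h2]
    exact Fintype.sum_equiv (LinearEquiv.toSpanNonzeroSingleton (ZMod p) _ v hv).toEquiv
      _ _ (fun c => by simp [LinearEquiv.toSpanNonzeroSingleton])
  -- for nonzero scalar c, v ↦ z + c • v is a bijection
  have htot : ∀ c : ZMod p, c ≠ 0 → ∑ v : ZMod p × ZMod p, w (z + c • v) = T := by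
    intro c hc
    rw [hT]
    exact Fintype.sum_bijective (fun v => z + c • v)
      ((Finite.injective_iff_bijective).mp (fun a b hab => by
        have := add_left_cancel hab
        exact smul_right_injective (ZMod p × ZMod p) hc this))
      _ _ (fun v => rfl)
  set S : Finset (ZMod p × ZMod p) := {0}ᶜ with hS
  have hScard : (S.card : ℝ) = (p:ℝ)^2 - 1 := by
    have : S.card = p^2 - 1 := by
      simp [hS, Finset.card_compl, Fintype.card_prod, ZMod.card, sq]
    rw [this]
    have : 1 ≤ p^2 := Nat.one_le_iff_ne_zero.mpr (pow_ne_zero _ (NeZero.ne p))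
    push_cast [Nat.cast_sub this]
    ring
  -- the double sum, two ways
  have eq1 : ∑ v ∈ S, ∑ c : ZMod p, w (z + c • v) = ((p:ℝ)^2 - 1) * (T / p) := by
    rw [Finset.sum_congr rfl (fun v hv => key v (by simpa [hS] using hv)),
      Finset.sum_const, nsmul_eq_mul, hScard]
  have inner : ∀ c : ZMod p, ∑ v ∈ S, w (z + c • v) =
      if c = 0 then ((p:ℝ)^2 - 1) * w z else T - w z := by
    intro c
    by_cases hc : c = 0
    · simp [hc, hS, hScard, Finset.sum_const, nsmul_eq_mul]
      exact Or.inl hScard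
    · simp only [hc, if_false]
      have h1 : ∑ v ∈ S, w (z + c • v) =
          (∑ v : ZMod p × ZMod p, w (z + c • v)) - w (z + c • (0:ZMod p × ZMod p)) := by
        rw [hS]
        rw [eq_sub_iff_add_eq]
        rw [← Finset.sum_singleton (fun v => w (z + c • v)) (0 : ZMod p × ZMod p)]
        rw [add_comm]
        exact Finset.sum_add_sum_compl {(0 : ZMod p × ZMod p)} _
      rw [h1, htot c hc]
      simp
  have eq2 : ∑ v ∈ S, ∑ c : ZMod p, w (z + c • v)
      = ((p:ℝ)^2 - 1) * w z + ((p:ℝ) - 1) * (T - w z) := by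
    rw [Finset.sum_comm]
    rw [Finset.sum_congr rfl (fun c _ => inner c)]
    have hsplit : ∀ c : ZMod p, (if c = 0 then ((p:ℝ)^2-1) * w z else T - w z)
        = (if c = 0 then ((p:ℝ)^2-1) * w z - (T - w z) else 0) + (T - w z) := by
      intro c; split <;> ring
    rw [Finset.sum_congr rfl (fun c _ => hsplit c), Finset.sum_add_distrib,
      Finset.sum_ite_eq' Finset.univ (0 : ZMod p), Finset.sum_const]
    simp [ZMod.card, nsmul_eq_mul]
    ring
  have hq : (p:ℝ) ≠ 0 := Nat.cast_ne_zero.mpr (NeZero.ne p)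
  have hq1 : (p:ℝ) - 1 ≠ 0 := by
    have : (2:ℝ) ≤ p := by exact_mod_cast hp.two_le
    linarith
  have heq := eq1.symm.trans eq2
  field_simp at heq
  field_simp
  have h2 : (w z * (p:ℝ)^2 - T) * ((p:ℝ) - 1) = 0 := by linear_combination -heq
  have h3 := (mul_eq_zero.mp h2).resolve_right hq1
  linarith
end

section
/- Let p be an odd prime, w : F_p^2 → ℝ, and H < F_p^2 a one-dimensional linear subspace. If every direction except possibly the one corresponding to H is perfect with respect to w, then w is H-periodic, i.e. w(g+h) = w(g) for all g ∈ F_p^2 and h ∈ H. -/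
open scoped Classical

/-- Summing a function over the span of a nonzero vector equals summing over scalar multiples. -/
lemma sum_span_singleton (p : ℕ) [Fact p.Prime] (v : ZMod p × ZMod p) (hv : v ≠ 0)
    (f : ZMod p × ZMod p → ℝ) :
    ∑ k : Submodule.span (ZMod p) {v}, f (k : ZMod p × ZMod p) = ∑ t : ZMod p, f (t • v) := by
  have hbij : Function.Bijective
      (fun t : ZMod p => (⟨t • v, Submodule.smul_mem _ t (Submodule.mem_span_singleton_self v)⟩ :
        Submodule.span (ZMod p) {v})) := by
    constructor
    · intro a b hab
      have h1 : a • v = b • v := congrArg Subtype.val hab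
      have h2 : (a - b) • v = 0 := by rw [sub_smul, h1, sub_self]
      rcases smul_eq_zero.mp h2 with h | h
      · exact sub_eq_zero.mp h
      · exact absurd h hv
    · rintro ⟨x, hx⟩
      obtain ⟨c, hc⟩ := Submodule.mem_span_singleton.mp hx
      exact ⟨c, Subtype.ext hc⟩
  exact (Fintype.sum_bijective _ hbij _ _ (fun t => rfl)).symm

theorem stmt1 (p : ℕ) (hp : p.Prime) (hodd : Odd p) [NeZero p]
    (w : ZMod p × ZMod p → ℝ) (H : Submodule (ZMod p) (ZMod p × ZMod p))
    (hH : Module.finrank (ZMod p) H = 1)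
    (hperf : ∀ H' : Submodule (ZMod p) (ZMod p × ZMod p),
      Module.finrank (ZMod p) H' = 1 → H' ≠ H → IsPerfect p w H') :
    ∀ g : ZMod p × ZMod p, ∀ h ∈ H, w (g + h) = w g := by
  haveI : Fact p.Prime := ⟨hp⟩
  have hpR : (p : ℝ) ≠ 0 := Nat.cast_ne_zero.mpr hp.pos.ne'
  -- a generator h₀ of H
  obtain ⟨v, hv0, hvgen⟩ := finrank_eq_one_iff'.mp hH
  set h₀ : ZMod p × ZMod p := (v : ZMod p × ZMod p) with hh₀def
  have hh₀0 : h₀ ≠ 0 := fun h => hv0 (Subtype.ext h)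
  have hh₀H : h₀ ∈ H := v.2
  -- a vector e outside H
  have hHne : H ≠ ⊤ := by
    intro htop
    rw [htop] at hH
    rw [finrank_top, Module.finrank_prod, Module.finrank_self] at hH
    omega
  obtain ⟨e, he⟩ : ∃ e, e ∉ H := by
    by_contra hcon
    push_neg at hcon
    exact hHne (Submodule.eq_top_iff'.mpr hcon)
  set S : ℝ := ∑ z : ZMod p × ZMod p, w z with hS
  -- key: the sum over any coset of H equals p * w g
  have key : ∀ g : ZMod p × ZMod p, ∑ s : ZMod p, w (g + s • h₀) = p * w g := by
    intro g
    have hvc0 : ∀ c : ZMod p, e + c • h₀ ≠ 0 := by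
      intro c hc
      apply he
      have : e = -(c • h₀) := by linear_combination (norm := abel) hc
      rw [this]
      exact neg_mem (Submodule.smul_mem _ _ hh₀H)
    have hvcH : ∀ c : ZMod p, Submodule.span (ZMod p) {e + c • h₀} ≠ H := by
      intro c hc
      apply he
      have hmem : e + c • h₀ ∈ H := hc ▸ Submodule.mem_span_singleton_self _
      have : e = (e + c • h₀) - c • h₀ := by abel
      rw [this]
      exact sub_mem hmem (Submodule.smul_mem _ _ hh₀H)
    have hline : ∀ c : ZMod p, ∑ t : ZMod p, w (g + t • (e + c • h₀)) = S / p := by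
      intro c
      have h1 := hperf (Submodule.span (ZMod p) {e + c • h₀})
        (finrank_span_singleton (hvc0 c)) (hvcH c) g
      rw [sum_span_singleton p _ (hvc0 c) (fun k => w (g + k))] at h1
      exact h1
    -- total: the map (t, s) ↦ g + t•e + s•h₀ is a bijection
    have hbij : Function.Bijective
        (fun ts : ZMod p × ZMod p => g + ts.1 • e + ts.2 • h₀) := by
      rw [Finite.injective_iff_bijective.symm]
      rintro ⟨t, s⟩ ⟨t', s'⟩ heq
      simp only at heq
      have h1 : (t - t') • e = (s' - s) • h₀ := by
        have := heq
        rw [sub_smul, sub_smul]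
        linear_combination (norm := abel) this
      have ht : t = t' := by
        by_contra hne
        apply he
        have htt : (t - t') ≠ 0 := sub_ne_zero.mpr hne
        have : e = (t - t')⁻¹ • ((s' - s) • h₀) := by
          rw [← h1, smul_smul, inv_mul_cancel₀ htt, one_smul]
        rw [this]
        exact Submodule.smul_mem _ _ (Submodule.smul_mem _ _ hh₀H)
      have hs : s = s' := by
        rw [ht] at h1
        simp only [sub_self, zero_smul] at h1
        have : (s' - s) • h₀ = 0 := h1.symm
        rcases smul_eq_zero.mp this with h | h
        · exact (sub_eq_zero.mp h).symm
        · exact absurd h hh₀0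
      simp [ht, hs]
    have htotal : ∑ t : ZMod p, ∑ s : ZMod p, w (g + t • e + s • h₀) = S := by
      have h2 := Fintype.sum_bijective _ hbij
        (fun ts : ZMod p × ZMod p => w (g + ts.1 • e + ts.2 • h₀)) w (fun ts => rfl)
      rw [hS, ← h2, ← Fintype.sum_prod_type']
    -- sum of all lines through g in directions ≠ H
    have hbig : ∑ c : ZMod p, ∑ t : ZMod p, w (g + t • (e + c • h₀)) = S := by
      rw [Finset.sum_congr rfl (fun c _ => hline c)]
      rw [Finset.sum_const, Finset.card_univ, ZMod.card]
      rw [nsmul_eq_mul]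
      field_simp
    -- rewrite each summand
    have hrw : ∀ c t : ZMod p, g + t • (e + c • h₀) = g + t • e + (t * c) • h₀ := by
      intro c t
      rw [smul_add, smul_smul, add_assoc]
    rw [Finset.sum_congr rfl (fun c _ => Finset.sum_congr rfl (fun t _ => by rw [hrw c t]))] at hbig
    rw [Finset.sum_comm] at hbig
    -- split off t = 0
    have hsplit : ∑ t : ZMod p, ∑ c : ZMod p, w (g + t • e + (t * c) • h₀)
        = p * w g + (S - ∑ s : ZMod p, w (g + s • h₀)) := by
      rw [← Finset.add_sum_erase Finset.univ _ (Finset.mem_univ (0 : ZMod p))]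
      congr 1
      · simp [Finset.sum_const, Finset.card_univ, ZMod.card]
      · have hterm : ∀ t ∈ Finset.univ.erase (0 : ZMod p),
            ∑ c : ZMod p, w (g + t • e + (t * c) • h₀)
              = ∑ s : ZMod p, w (g + t • e + s • h₀) := by
          intro t ht
          have ht0 : t ≠ 0 := Finset.ne_of_mem_erase ht
          exact Fintype.sum_equiv (Equiv.mulLeft₀ t ht0) _ _ (fun c => rfl)
        rw [Finset.sum_congr rfl hterm]
        have := htotal
        rw [← Finset.add_sum_erase Finset.univ
          (fun t => ∑ s : ZMod p, w (g + t • e + s • h₀)) (Finset.mem_univ (0 : ZMod p))] at this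
        simp only [zero_smul, add_zero] at this
        linarith [this]
    rw [hsplit] at hbig
    linarith [hbig]
  -- finish
  intro g h hh
  obtain ⟨a, ha⟩ := hvgen ⟨h, hh⟩
  have ha' : a • h₀ = h := congrArg Subtype.val ha
  have e1 : ∑ s : ZMod p, w (g + h + s • h₀) = ∑ s : ZMod p, w (g + s • h₀) := by
    have : ∀ s : ZMod p, g + h + s • h₀ = g + (a + s) • h₀ := by
      intro s
      rw [add_smul, ha']
      abel
    rw [Finset.sum_congr rfl (fun s _ => by rw [this s])]
    exact Fintype.sum_equiv (Equiv.addLeft a) _ _ (fun s => rfl)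
  have := key (g + h)
  rw [e1, key g] at this
  exact (mul_left_cancel₀ hpR this).symm
end

section
/- Let p ≥ 3 be prime. The set S = {(z, z^{(p+1)/2}) : z ∈ F_p} satisfies: the (p-1)/2 directions not determined by S are exactly perfect with respect to the indicator function of S; equivalently, every line in an undetermined direction contains exactly one point of S. -/
open scoped Classical

/-- `S` is an (affine) line in `F_p^2`: a coset of a one-dimensional subspace. -/
def IsLine (p : ℕ) (S : Set (ZMod p × ZMod p)) : Prop :=
  ∃ (a : ZMod p × ZMod p) (H : Submodule (ZMod p) (ZMod p × ZMod p)),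
    Module.finrank (ZMod p) H = 1 ∧ S = (a + ·) '' (H : Set (ZMod p × ZMod p))

/-- `S` determines the direction of `H` if some line in that direction contains
at least two points of `S`; equivalently, two distinct points of `S` differ by an
element of `H`. -/
def Determines (p : ℕ) (S : Set (ZMod p × ZMod p))
    (H : Submodule (ZMod p) (ZMod p × ZMod p)) : Prop :=
  ∃ x ∈ S, ∃ y ∈ S, x ≠ y ∧ x - y ∈ H
namespace Stmt5Aux
variable {p : ℕ} [hpf : Fact p.Prime]

noncomputable def ff (p : ℕ) : ZMod p → ZMod p := fun x => x ^ ((p + 1) / 2)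

lemma podd (hp3 : 3 ≤ p) : p % 2 = 1 := Nat.odd_iff.mp (hpf.out.odd_of_ne_two (by omega))

lemma two_ne (hp3 : 3 ≤ p) : (2 : ZMod p) ≠ 0 := by
  have : ((2 : ℕ) : ZMod p) ≠ 0 := by
    rw [Ne, ZMod.natCast_eq_zero_iff]
    intro h
    have := Nat.le_of_dvd (by norm_num) h
    have := podd (p := p) hp3
    omega
  simpa using this

lemma ff_sq (hp3 : 3 ≤ p) {x : ZMod p} (hx : IsSquare x) : ff p x = x := by
  obtain ⟨v, rfl⟩ := hx
  rcases eq_or_ne v 0 with rfl | hv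
  · simp only [ff, mul_zero]
    exact zero_pow (by omega)
  · have h2 : 2 * ((p + 1) / 2) = p + 1 := by have := podd (p := p) hp3; omega
    have h3 : p + 1 = (p - 1) + 2 := by omega
    calc (v * v) ^ ((p + 1) / 2) = v ^ (2 * ((p + 1) / 2)) := by rw [← sq, ← pow_mul]
    _ = v ^ (p - 1) * v ^ 2 := by rw [h2, h3, pow_add]
    _ = v * v := by rw [ZMod.pow_card_sub_one_eq_one hv, one_mul, sq]

lemma ff_nonsq (hp3 : 3 ≤ p) {x : ZMod p} (hx : ¬ IsSquare x) : ff p x = -x := by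
  have hx0 : x ≠ 0 := fun h => hx (h ▸ ⟨0, by simp⟩)
  have hd : x ^ (p / 2) = -1 := by
    rcases FiniteField.pow_dichotomy (by rw [ZMod.ringChar_zmod_n]; omega) hx0 with h | h
    · rw [ZMod.card] at h
      exact absurd ((ZMod.euler_criterion p hx0).mpr h) hx
    · rwa [ZMod.card] at h
  have h1 : (p + 1) / 2 = p / 2 + 1 := by have := podd (p := p) hp3; omega
  show x ^ ((p + 1) / 2) = -x
  rw [h1, pow_succ, hd, neg_one_mul]

def Sg (p : ℕ) : Set (ZMod p × ZMod p) := {z | ∃ x : ZMod p, z = (x, ff p x)}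

noncomputable def lineD (p : ℕ) (m : ZMod p) : Submodule (ZMod p) (ZMod p × ZMod p) :=
  Submodule.span (ZMod p) {((1 : ZMod p), m)}

noncomputable def lineV (p : ℕ) : Submodule (ZMod p) (ZMod p × ZMod p) :=
  Submodule.span (ZMod p) {((0 : ZMod p), (1 : ZMod p))}

lemma mem_lineD {m : ZMod p} {z : ZMod p × ZMod p} :
    z ∈ lineD p m ↔ ∃ c : ZMod p, z = (c, c * m) := by
  rw [lineD, Submodule.mem_span_singleton]
  constructor
  · rintro ⟨c, rfl⟩; exact ⟨c, by simp [Prod.smul_def, smul_eq_mul]⟩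
  · rintro ⟨c, rfl⟩; exact ⟨c, by simp [Prod.smul_def, smul_eq_mul]⟩

lemma mem_lineV {z : ZMod p × ZMod p} :
    z ∈ lineV p ↔ z.1 = 0 := by
  rw [lineV, Submodule.mem_span_singleton]
  constructor
  · rintro ⟨c, rfl⟩; simp [Prod.smul_def]
  · intro h
    exact ⟨z.2, by rw [Prod.smul_def]; ext <;> simp [h]⟩

lemma lineD_ne_lineV (m : ZMod p) : lineD p m ≠ lineV p := by
  intro h
  have : ((0 : ZMod p), (1 : ZMod p)) ∈ lineD p m := by
    rw [h, mem_lineV]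
  rw [mem_lineD] at this
  obtain ⟨c, hc⟩ := this
  have h1 : c = 0 := by have := congrArg Prod.fst hc; simp at this; exact this.symm
  have h2 : (1 : ZMod p) = c * m := by simpa using congrArg Prod.snd hc
  rw [h1, zero_mul] at h2
  exact one_ne_zero h2

lemma lineD_inj : Function.Injective (lineD p) := by
  intro m m' h
  have : ((1 : ZMod p), m') ∈ lineD p m := by
    rw [h, mem_lineD]; exact ⟨1, by simp⟩
  rw [mem_lineD] at this
  obtain ⟨c, hc⟩ := this
  have h1 : (1 : ZMod p) = c := by simpa using congrArg Prod.fst hc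
  have h2 : m' = c * m := by simpa using congrArg Prod.snd hc
  rw [← h1, one_mul] at h2
  exact h2.symm

lemma sq_of_sq_mul_sq {x y : ZMod p} (hx0 : x ≠ 0) (hx : IsSquare x)
    (hxy : IsSquare (x * y)) : IsSquare y := by
  obtain ⟨r, hr⟩ := hx
  obtain ⟨t, ht⟩ := hxy
  have hr0 : r ≠ 0 := by rintro rfl; simp at hr; exact hx0 hr
  refine ⟨t / r, ?_⟩
  field_simp
  linear_combination ht - y * hr

lemma det_lineD_iff (hp3 : 3 ≤ p) (m : ZMod p) :
    Determines p (Sg p) (lineD p m) ↔ (m = 1 ∨ m = -1 ∨ ¬ IsSquare (m ^ 2 - 1)) := by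
  have h2ne := two_ne (p := p) hp3
  constructor
  · rintro ⟨z, ⟨x, rfl⟩, w, ⟨y, rfl⟩, hne, hmem⟩
    have hxy : x ≠ y := by rintro rfl; exact hne rfl
    rw [mem_lineD] at hmem
    obtain ⟨c, hc⟩ := hmem
    have h1 : x - y = c := by simpa using congrArg Prod.fst hc
    have h2 : ff p x - ff p y = c * m := by simpa using congrArg Prod.snd hc
    rw [← h1] at h2
    have hxy0 : x - y ≠ 0 := sub_ne_zero.mpr hxy
    rcases eq_or_ne x 0 with rfl | hx0
    · have hy0 : y ≠ 0 := fun h => hxy h.symm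
      rw [show ff p 0 = 0 from ff_sq hp3 ⟨0, by simp⟩] at h2
      by_cases hy : IsSquare y
      · left
        rw [ff_sq hp3 hy] at h2
        have : y * 1 = y * m := by linear_combination -h2
        exact (mul_left_cancel₀ hy0 this).symm
      · right; left
        rw [ff_nonsq hp3 hy] at h2
        have : y * (-1) = y * m := by linear_combination -h2
        exact (mul_left_cancel₀ hy0 this).symm
    · rcases eq_or_ne y 0 with rfl | hy0
      · rw [show ff p 0 = 0 from ff_sq hp3 ⟨0, by simp⟩] at h2
        by_cases hx : IsSquare x
        · left
          rw [ff_sq hp3 hx] at h2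
          have : x * 1 = x * m := by linear_combination h2
          exact (mul_left_cancel₀ hx0 this).symm
        · right; left
          rw [ff_nonsq hp3 hx] at h2
          have : x * (-1) = x * m := by linear_combination h2
          exact (mul_left_cancel₀ hx0 this).symm
      · by_cases hx : IsSquare x <;> by_cases hy : IsSquare y
        · left
          rw [ff_sq hp3 hx, ff_sq hp3 hy] at h2
          have : (x - y) * 1 = (x - y) * m := by linear_combination h2
          exact (mul_left_cancel₀ hxy0 this).symm
        · right; right
          intro hsq
          obtain ⟨s, hs⟩ := hsq
          rw [ff_sq hp3 hx, ff_nonsq hp3 hy] at h2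
          have key : (s * (x - y)) ^ 2 = (2:ZMod p) ^ 2 * (x * y) := by
            calc (s * (x - y)) ^ 2 = (m ^ 2 - 1) * (x - y) ^ 2 := by rw [hs]; ring
            _ = ((x - y) * m) ^ 2 - (x - y) ^ 2 := by ring
            _ = (x + y) ^ 2 - (x - y) ^ 2 := by rw [← h2]; ring
            _ = (2:ZMod p) ^ 2 * (x * y) := by ring
          have hxysq : IsSquare (x * y) := by
            refine ⟨s * (x - y) / 2, ?_⟩
            field_simp
            linear_combination -key
          exact hy (sq_of_sq_mul_sq hx0 hx hxysq)
        · right; right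
          intro hsq
          obtain ⟨s, hs⟩ := hsq
          rw [ff_nonsq hp3 hx, ff_sq hp3 hy] at h2
          have key : (s * (x - y)) ^ 2 = (2:ZMod p) ^ 2 * (x * y) := by
            calc (s * (x - y)) ^ 2 = (m ^ 2 - 1) * (x - y) ^ 2 := by rw [hs]; ring
            _ = ((x - y) * m) ^ 2 - (x - y) ^ 2 := by ring
            _ = (-x - y) ^ 2 - (x - y) ^ 2 := by rw [← h2]
            _ = (2:ZMod p) ^ 2 * (x * y) := by ring
          have hxysq : IsSquare (x * y) := by
            refine ⟨s * (x - y) / 2, ?_⟩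
            field_simp
            linear_combination -key
          rw [mul_comm] at hxysq
          exact hx (sq_of_sq_mul_sq hy0 hy hxysq)
        · right; left
          rw [ff_nonsq hp3 hx, ff_nonsq hp3 hy] at h2
          have : (x - y) * m = (x - y) * (-1) := by linear_combination -h2
          exact mul_left_cancel₀ hxy0 this
  · rintro (rfl | rfl | hns)
    · refine ⟨(1, ff p 1), ⟨1, rfl⟩, (0, ff p 0), ⟨0, rfl⟩, ?_, ?_⟩
      · intro h
        have := congrArg Prod.fst h
        simp at this
      · rw [mem_lineD]
        refine ⟨1, ?_⟩
        rw [ff_sq hp3 ⟨1, by simp⟩, ff_sq hp3 ⟨0, by simp⟩]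
        simp
    · obtain ⟨n, hn⟩ := FiniteField.exists_nonsquare (F := ZMod p)
        (by rw [ZMod.ringChar_zmod_n]; omega)
      have hn0 : n ≠ 0 := fun h => hn (h ▸ ⟨0, by simp⟩)
      refine ⟨(n, ff p n), ⟨n, rfl⟩, (0, ff p 0), ⟨0, rfl⟩, ?_, ?_⟩
      · intro h
        exact hn0 (by simpa using congrArg Prod.fst h)
      · rw [mem_lineD]
        refine ⟨n, ?_⟩
        rw [ff_nonsq hp3 hn, ff_sq hp3 ⟨0, by simp⟩]
        ext <;> simp
    · have hm1 : m ≠ 1 := by rintro rfl; exact hns ⟨0, by ring⟩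
      have hmn1 : m ≠ -1 := by rintro rfl; exact hns ⟨0, by ring⟩
      have hm1' : m + 1 ≠ 0 := fun h => hmn1 (by linear_combination h)
      set x : ZMod p := (m + 1) ^ 2 with hxdef
      set y : ZMod p := m ^ 2 - 1 with hydef
      have hxs : IsSquare x := ⟨m + 1, by rw [hxdef]; ring⟩
      have hxy : x ≠ y := by
        intro h
        have : (2:ZMod p) * (m + 1) = 0 := by rw [hxdef, hydef] at h; linear_combination h
        rcases mul_eq_zero.mp this with h' | h'
        · exact h2ne h'
        · exact hm1' h'
      refine ⟨(x, ff p x), ⟨x, rfl⟩, (y, ff p y), ⟨y, rfl⟩, ?_, ?_⟩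
      · intro h
        exact hxy (by simpa using congrArg Prod.fst h)
      · rw [mem_lineD]
        refine ⟨x - y, ?_⟩
        rw [Prod.mk_sub_mk, Prod.mk.injEq]
        refine ⟨rfl, ?_⟩
        rw [ff_sq hp3 hxs, ff_nonsq hp3 hns, hxdef, hydef]
        ring

lemma ff_inj_ne {x y : ZMod p} (hxy : x ≠ y) : (x, ff p x) ≠ (y, ff p y) := by
  intro h; exact hxy (by simpa using congrArg Prod.fst h)

lemma not_det_lineV : ¬ Determines p (Sg p) (lineV p) := by
  rintro ⟨z, ⟨x, rfl⟩, w, ⟨y, rfl⟩, hne, hmem⟩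
  rw [mem_lineV] at hmem
  have h0 : x - y = 0 := hmem
  have : x = y := by linear_combination h0
  exact hne (by rw [this])

lemma classify {H : Submodule (ZMod p) (ZMod p × ZMod p)}
    (hH : Module.finrank (ZMod p) H = 1) :
    H = lineV p ∨ ∃ m : ZMod p, H = lineD p m := by
  obtain ⟨v, hv0, hv⟩ := finrank_eq_one_iff'.mp hH
  have hvne : (v : ZMod p × ZMod p) ≠ 0 := fun h => hv0 (Subtype.ext h)
  have hspan : H = Submodule.span (ZMod p) {(v : ZMod p × ZMod p)} := by
    apply le_antisymm
    · intro w hw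
      obtain ⟨c, hc⟩ := hv ⟨w, hw⟩
      rw [Submodule.mem_span_singleton]
      exact ⟨c, congrArg Subtype.val hc⟩
    · rw [Submodule.span_singleton_le_iff_mem]
      exact v.2
  obtain ⟨w, hwne, hspan⟩ : ∃ w : ZMod p × ZMod p, w ≠ 0 ∧ H = Submodule.span (ZMod p) {w} :=
    ⟨↑v, hvne, hspan⟩
  clear hv hv0 hvne
  rcases eq_or_ne w.1 0 with h1 | h1
  · left
    have h2 : w.2 ≠ 0 := by
      intro h2
      exact hwne (Prod.ext h1 h2)
    rw [hspan, lineV]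
    apply le_antisymm
    · rw [Submodule.span_singleton_le_iff_mem, Submodule.mem_span_singleton]
      refine ⟨w.2, ?_⟩
      ext
      · simp [h1]
      · simp
    · rw [Submodule.span_singleton_le_iff_mem, Submodule.mem_span_singleton]
      refine ⟨(w.2)⁻¹, ?_⟩
      ext
      · simp [h1]
      · simp [inv_mul_cancel₀ h2]
  · right
    refine ⟨w.2 / w.1, ?_⟩
    rw [hspan]
    apply le_antisymm
    · rw [Submodule.span_singleton_le_iff_mem, mem_lineD]
      refine ⟨w.1, ?_⟩
      rw [Prod.ext_iff]
      refine ⟨rfl, ?_⟩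
      field_simp
    · rw [lineD, Submodule.span_singleton_le_iff_mem, Submodule.mem_span_singleton]
      refine ⟨(w.1)⁻¹, ?_⟩
      rw [Prod.ext_iff]
      constructor
      · simp [inv_mul_cancel₀ h1]
      · simp only [Prod.smul_snd, smul_eq_mul]
        field_simp


noncomputable def qq (p : ℕ) [Fact p.Prime] : ZMod p → ZMod p := fun a => (a + a⁻¹) / 2

lemma qq_poly (hp3 : 3 ≤ p) {a t : ZMod p} (ha0 : a ≠ 0) (hq : qq p a = t) :
    a ^ 2 - 2 * t * a + 1 = 0 := by
  have h2ne' := two_ne (p := p) hp3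
  rw [qq] at hq
  field_simp at hq
  linear_combination hq

lemma helper (hp3 : 3 ≤ p) {t s : ZMod p} (hs : s * s = t ^ 2 - 1)
    (ht1 : t ≠ 1) (htn1 : t ≠ -1) :
    (t + s ≠ 0 ∧ t + s ≠ 1 ∧ t + s ≠ -1) ∧ qq p (t + s) = t := by
  have h2ne := two_ne (p := p) hp3
  have hmul : (t + s) * (t - s) = 1 := by linear_combination -hs
  have ha0 : t + s ≠ 0 := by
    intro h
    rw [h, zero_mul] at hmul
    exact zero_ne_one hmul
  have hinv : (t + s)⁻¹ = t - s := inv_eq_of_mul_eq_one_right hmul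
  refine ⟨⟨ha0, ?_, ?_⟩, ?_⟩
  · intro h
    rw [h, one_mul] at hmul
    exact ht1 (mul_left_cancel₀ h2ne (by linear_combination h + hmul))
  · intro h
    rw [h] at hmul
    exact htn1 (mul_left_cancel₀ h2ne (by linear_combination h - hmul))
  · rw [qq]
    show (t + s + (t + s)⁻¹) / 2 = t
    rw [hinv, div_eq_iff h2ne]
    ring

lemma card_U (hp3 : 3 ≤ p) :
    (Finset.univ.filter
      (fun m : ZMod p => m ≠ 1 ∧ m ≠ -1 ∧ IsSquare (m ^ 2 - 1))).card = (p - 3) / 2 := by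
  have h2ne := two_ne (p := p) hp3
  have h01 : (0 : ZMod p) ≠ 1 := zero_ne_one
  have h0n1 : (0 : ZMod p) ≠ -1 := by
    intro h
    exact one_ne_zero (by linear_combination h)
  have h1n1 : (1 : ZMod p) ≠ -1 := by
    intro h
    exact h2ne (by linear_combination h)
  set U := Finset.univ.filter
      (fun m : ZMod p => m ≠ 1 ∧ m ≠ -1 ∧ IsSquare (m ^ 2 - 1)) with hU
  set A := Finset.univ.filter (fun a : ZMod p => a ≠ 0 ∧ a ≠ 1 ∧ a ≠ -1) with hA
  have hAcard : A.card = p - 3 := by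
    have : A = Finset.univ \ {0, 1, -1} := by
      ext a
      simp [hA, and_comm]
    rw [this, Finset.card_sdiff_of_subset (Finset.subset_univ _)]
    have c3 : ({0, 1, -1} : Finset (ZMod p)).card = 3 :=
      Finset.card_eq_three.mpr ⟨0, 1, -1, h01, h0n1, h1n1, rfl⟩
    rw [c3, Finset.card_univ, ZMod.card]
  have himg : A.image (qq p) = U := by
    ext t
    simp only [Finset.mem_image, hU, hA, Finset.mem_filter, Finset.mem_univ, true_and]
    constructor
    · rintro ⟨a, ⟨ha0, ha1, han1⟩, hq⟩
      have poly := qq_poly hp3 ha0 hq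
      have hainv : a * a⁻¹ = 1 := mul_inv_cancel₀ ha0
      refine ⟨?_, ?_, ⟨(a - a⁻¹) / 2, ?_⟩⟩
      · rintro rfl
        have : (a - 1) * (a - 1) = 0 := by linear_combination poly
        exact ha1 (by
          have := mul_self_eq_zero.mp this
          linear_combination this)
      · rintro rfl
        have : (a + 1) * (a + 1) = 0 := by linear_combination poly
        exact han1 (by
          have := mul_self_eq_zero.mp this
          linear_combination this)
      · field_simp
        linear_combination (-(2 * t * a + a ^ 2 + 1)) * poly
    · rintro ⟨ht1, htn1, ⟨s, hs⟩⟩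
      obtain ⟨⟨ha0, ha1, han1⟩, hq⟩ := helper hp3 hs.symm ht1 htn1
      exact ⟨t + s, ⟨ha0, ha1, han1⟩, hq⟩
  have hfib : ∀ t ∈ A.image (qq p), (A.filter (fun a => qq p a = t)).card = 2 := by
    intro t ht
    rw [himg] at ht
    simp only [hU, Finset.mem_filter, Finset.mem_univ, true_and] at ht
    obtain ⟨ht1, htn1, s, hs⟩ := ht
    have hs' : s * s = t ^ 2 - 1 := hs.symm
    have hs0 : s ≠ 0 := by
      rintro rfl
      have h1 : (t - 1) * (t + 1) = 0 := by linear_combination hs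
      rcases mul_eq_zero.mp h1 with h | h
      · exact ht1 (by linear_combination h)
      · exact htn1 (by linear_combination h)
    have hne2 : t + s ≠ t - s := by
      intro h
      have : (2 : ZMod p) * s = 0 := by linear_combination h
      rcases mul_eq_zero.mp this with h' | h'
      · exact h2ne h'
      · exact hs0 h'
    have hfil : A.filter (fun a => qq p a = t) = {t + s, t - s} := by
      ext a
      simp only [Finset.mem_filter, hA, Finset.mem_univ, true_and,
        Finset.mem_insert, Finset.mem_singleton]
      constructor
      · rintro ⟨⟨ha0, ha1, han1⟩, hq⟩
        have poly := qq_poly hp3 ha0 hq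
        have : (a - (t + s)) * (a - (t - s)) = 0 := by linear_combination poly - hs'
        rcases mul_eq_zero.mp this with h | h
        · exact Or.inl (by linear_combination h)
        · exact Or.inr (by linear_combination h)
      · rintro (rfl | rfl)
        · obtain ⟨h3, hq⟩ := helper hp3 hs' ht1 htn1
          exact ⟨h3, hq⟩
        · have hs'' : (-s) * (-s) = t ^ 2 - 1 := by linear_combination hs'
          obtain ⟨h3, hq⟩ := helper hp3 hs'' ht1 htn1
          rw [show t + -s = t - s by ring] at h3 hq
          exact ⟨h3, hq⟩
    rw [hfil, Finset.card_insert_of_notMem (by simpa using hne2), Finset.card_singleton]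
  have hsum := Finset.card_eq_sum_card_image (qq p) A
  rw [Finset.sum_congr rfl hfib] at hsum
  rw [Finset.sum_const, smul_eq_mul] at hsum
  rw [himg, hAcard] at hsum
  omega


lemma count (hp3 : 3 ≤ p) :
    Nat.card {H : Submodule (ZMod p) (ZMod p × ZMod p) //
      Module.finrank (ZMod p) H = 1 ∧ ¬ Determines p (Sg p) H} = (p - 1) / 2 := by
  have hT : {H : Submodule (ZMod p) (ZMod p × ZMod p) |
      Module.finrank (ZMod p) H = 1 ∧ ¬ Determines p (Sg p) H}
      = insert (lineV p)
          (lineD p '' {m : ZMod p | m ≠ 1 ∧ m ≠ -1 ∧ IsSquare (m ^ 2 - 1)}) := by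
    ext H
    simp only [Set.mem_setOf_eq, Set.mem_insert_iff, Set.mem_image]
    constructor
    · rintro ⟨hr, hd⟩
      rcases classify hr with h | ⟨m, rfl⟩
      · exact Or.inl h
      · right
        rw [det_lineD_iff hp3] at hd
        push_neg at hd
        exact ⟨m, ⟨hd.1, hd.2.1, hd.2.2⟩, rfl⟩
    · rintro (rfl | ⟨m, hm, rfl⟩)
      · refine ⟨finrank_span_singleton ?_, not_det_lineV⟩
        simp [Prod.ext_iff]
      · refine ⟨finrank_span_singleton ?_, ?_⟩
        · simp [Prod.ext_iff]
        · rw [det_lineD_iff hp3]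
          rintro (h | h | h)
          · exact hm.1 h
          · exact hm.2.1 h
          · exact h hm.2.2
  have hcoe : Nat.card {H : Submodule (ZMod p) (ZMod p × ZMod p) //
      Module.finrank (ZMod p) H = 1 ∧ ¬ Determines p (Sg p) H}
      = Set.ncard {H : Submodule (ZMod p) (ZMod p × ZMod p) |
      Module.finrank (ZMod p) H = 1 ∧ ¬ Determines p (Sg p) H} :=
    Nat.card_coe_set_eq _
  rw [hcoe, hT]
  have hUs : {m : ZMod p | m ≠ 1 ∧ m ≠ -1 ∧ IsSquare (m ^ 2 - 1)}
      = ↑(Finset.univ.filter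
        (fun m : ZMod p => m ≠ 1 ∧ m ≠ -1 ∧ IsSquare (m ^ 2 - 1))) := by
    ext m; simp
  have hnotmem : lineV p ∉
      lineD p '' {m : ZMod p | m ≠ 1 ∧ m ≠ -1 ∧ IsSquare (m ^ 2 - 1)} := by
    rintro ⟨m, _, heq⟩
    exact lineD_ne_lineV m heq
  have hfin : (lineD p '' {m : ZMod p | m ≠ 1 ∧ m ≠ -1 ∧ IsSquare (m ^ 2 - 1)}).Finite :=
    (Set.toFinite _).image _
  rw [Set.ncard_insert_of_notMem hnotmem hfin,
    Set.ncard_image_of_injOn (lineD_inj.injOn), hUs, Set.ncard_coe_finset, card_U hp3]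
  have := podd (p := p) hp3
  omega

lemma unique_point (hp3 : 3 ≤ p) {H : Submodule (ZMod p) (ZMod p × ZMod p)}
    (hr : Module.finrank (ZMod p) H = 1) (hd : ¬ Determines p (Sg p) H)
    (a : ZMod p × ZMod p) : ∃! z : ZMod p × ZMod p, z ∈ Sg p ∧ z - a ∈ H := by
  rcases classify hr with rfl | ⟨m, rfl⟩
  · refine ⟨(a.1, ff p a.1), ⟨⟨a.1, rfl⟩, ?_⟩, ?_⟩
    · rw [mem_lineV]
      show a.1 - a.1 = 0
      ring
    · rintro z ⟨⟨x, rfl⟩, hz⟩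
      rw [mem_lineV] at hz
      have hx : x = a.1 := by
        have : x - a.1 = 0 := hz
        linear_combination this
      rw [hx]
  · -- slope m
    have hginj : Function.Injective (fun x : ZMod p => ff p x - m * x) := by
      intro x y hxy
      by_contra hne
      refine hd ⟨(x, ff p x), ⟨x, rfl⟩, (y, ff p y), ⟨y, rfl⟩, ff_inj_ne hne, ?_⟩
      rw [mem_lineD]
      refine ⟨x - y, ?_⟩
      rw [Prod.mk_sub_mk, Prod.mk.injEq]
      refine ⟨rfl, ?_⟩
      have : ff p x - m * x = ff p y - m * y := hxy
      linear_combination this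
    have hgsurj := Finite.injective_iff_surjective.mp hginj
    obtain ⟨x, hx⟩ := hgsurj (a.2 - m * a.1)
    have hx' : ff p x - m * x = a.2 - m * a.1 := hx
    refine ⟨(x, ff p x), ⟨⟨x, rfl⟩, ?_⟩, ?_⟩
    · rw [mem_lineD]
      refine ⟨x - a.1, ?_⟩
      rw [Prod.ext_iff]
      refine ⟨rfl, ?_⟩
      show ff p x - a.2 = (x - a.1) * m
      linear_combination hx'
    · rintro z ⟨⟨y, rfl⟩, hz⟩
      rw [mem_lineD] at hz
      obtain ⟨c, hc⟩ := hz
      have h1 : y - a.1 = c := by simpa using congrArg Prod.fst hc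
      have h2 : ff p y - a.2 = c * m := by simpa using congrArg Prod.snd hc
      have : ff p y - m * y = a.2 - m * a.1 := by
        rw [← h1] at h2
        linear_combination h2
      have := hginj (this.trans hx'.symm)
      rw [this]

lemma total_sum [NeZero p] :
    ∑ z : ZMod p × ZMod p, (Sg p).indicator (1 : (ZMod p × ZMod p) → ℝ) z = p := by
  classical
  rw [Finset.sum_indicator_eq_sum_filter]
  have hfil : Finset.univ.filter (fun z => z ∈ Sg p)
      = Finset.univ.image (fun x : ZMod p => (x, ff p x)) := by
    ext z
    simp only [Finset.mem_filter, Finset.mem_univ, true_and, Finset.mem_image]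
    constructor
    · rintro ⟨x, rfl⟩; exact ⟨x, rfl⟩
    · rintro ⟨x, rfl⟩; exact ⟨x, rfl⟩
  rw [hfil]
  simp only [Pi.one_apply]
  rw [Finset.sum_const]
  rw [Finset.card_image_of_injective _ (fun x y h => by simpa using congrArg Prod.fst h)]
  simp [ZMod.card]

lemma perfect (hp3 : 3 ≤ p) {H : Submodule (ZMod p) (ZMod p × ZMod p)}
    (hr : Module.finrank (ZMod p) H = 1) (hd : ¬ Determines p (Sg p) H) :
    IsPerfect p ((Sg p).indicator 1) H := by
  intro a
  obtain ⟨z, ⟨hzS, hzH⟩, huniq⟩ := unique_point hp3 hr hd a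
  have h0 : NeZero p := ⟨hpf.out.ne_zero⟩
  rw [total_sum]
  have hp0 : (p : ℝ) ≠ 0 := Nat.cast_ne_zero.mpr hpf.out.ne_zero
  rw [div_self hp0]
  set h₀ : H := ⟨z - a, hzH⟩ with hh0
  calc ∑ h : H, (Sg p).indicator 1 (a + (h : ZMod p × ZMod p))
      = ∑ h : H, (if h = h₀ then (1:ℝ) else 0) := by
        apply Finset.sum_congr rfl
        intro h _
        rw [Set.indicator_apply]
        by_cases hh : h = h₀
        · rw [if_pos hh, if_pos]
          · rfl
          · rw [hh, hh0]
            show a + (z - a) ∈ Sg p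
            rwa [add_sub_cancel]
        · rw [if_neg hh, if_neg]
          intro hmem
          apply hh
          have := huniq (a + (h : ZMod p × ZMod p)) ⟨hmem, by simpa using h.2⟩
          apply Subtype.ext
          rw [hh0]
          show (h : ZMod p × ZMod p) = z - a
          rw [← this]
          ring
    _ = 1 := by simp

end Stmt5Aux

theorem stmt5 (p : ℕ) (hp : p.Prime) (hp3 : 3 ≤ p) [NeZero p]
    (S : Set (ZMod p × ZMod p))
    (hS : S = {z : ZMod p × ZMod p | ∃ x : ZMod p, z = (x, x ^ ((p + 1) / 2))}) :
    Nat.card {H : Submodule (ZMod p) (ZMod p × ZMod p) //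
        Module.finrank (ZMod p) H = 1 ∧ ¬ Determines p S H} = (p - 1) / 2 ∧
      ∀ H : Submodule (ZMod p) (ZMod p × ZMod p),
        Module.finrank (ZMod p) H = 1 → ¬ Determines p S H →
          IsPerfect p (S.indicator 1) H ∧
            ∀ a : ZMod p × ZMod p, ∃! z : ZMod p × ZMod p, z ∈ S ∧ z - a ∈ H := by
  haveI : Fact p.Prime := ⟨hp⟩
  have hSS : S = Stmt5Aux.Sg p := by rw [hS]; rfl
  subst hSS
  refine ⟨Stmt5Aux.count hp3, ?_⟩
  intro H hr hd
  exact ⟨Stmt5Aux.perfect hp3 hr hd, Stmt5Aux.unique_point hp3 hr hd⟩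
end

section
/- Let p ≥ 3 be prime, and let l₁, l₂ ⊆ F_p^2 be two nonparallel affine lines, with w = 1_{l₁} − 1_{l₂}. Then supp(w) = (l₁ ∪ l₂) \ (l₁ ∩ l₂) has size 2(p−1), and exactly p−1 directions are perfect with respect to w (namely all directions except the two directions of l₁ and l₂). -/
open scoped Classical

open Module Finset

lemma isCompl_of_ne {p : ℕ} (hp : p.Prime) {H H' : Submodule (ZMod p) (ZMod p × ZMod p)}
    (h1 : finrank (ZMod p) H = 1) (h1' : finrank (ZMod p) H' = 1) (hne : H ≠ H') :
    IsCompl H H' := by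
  haveI := Fact.mk hp
  have hbot : H ⊓ H' = ⊥ := by
    by_contra hb
    obtain ⟨v, hv, hv0⟩ := Submodule.exists_mem_ne_zero_of_ne_bot hb
    have hs1 : Submodule.span (ZMod p) {v} ≤ H := by
      rw [Submodule.span_le, Set.singleton_subset_iff]; exact hv.1
    have hs2 : Submodule.span (ZMod p) {v} ≤ H' := by
      rw [Submodule.span_le, Set.singleton_subset_iff]; exact hv.2
    have e1 : Submodule.span (ZMod p) {v} = H :=
      Submodule.eq_of_le_of_finrank_le hs1 (by rw [h1, finrank_span_singleton hv0])
    have e2 : Submodule.span (ZMod p) {v} = H' :=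
      Submodule.eq_of_le_of_finrank_le hs2 (by rw [h1', finrank_span_singleton hv0])
    exact hne (e1 ▸ e2)
  have htop : H ⊔ H' = ⊤ := by
    apply Submodule.eq_top_of_finrank_eq
    have := Submodule.finrank_sup_add_finrank_inf_eq H H'
    rw [hbot, h1, h1'] at this
    simp only [finrank_bot, add_zero] at this
    rw [this]
    simp [Module.finrank_prod]
  exact ⟨disjoint_iff.mpr hbot, codisjoint_iff.mpr htop⟩

lemma unique_point {p : ℕ} (hp : p.Prime) {H H' : Submodule (ZMod p) (ZMod p × ZMod p)}
    (h1 : finrank (ZMod p) H = 1) (h1' : finrank (ZMod p) H' = 1) (hne : H ≠ H')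
    (a a' : ZMod p × ZMod p) :
    ∃! h : H, a + (h : ZMod p × ZMod p) ∈ (a' + ·) '' (H' : Set (ZMod p × ZMod p)) := by
  obtain ⟨hdisj, hcod⟩ := isCompl_of_ne hp h1 h1' hne
  have htop : H ⊔ H' = ⊤ := codisjoint_iff.mp hcod
  have hbot : H ⊓ H' = ⊥ := disjoint_iff.mp hdisj
  have hd : a' - a ∈ H ⊔ H' := htop ▸ Submodule.mem_top
  obtain ⟨x, hx, y, hy, hxy⟩ := Submodule.mem_sup.mp hd
  refine ⟨⟨x, hx⟩, ⟨-y, H'.neg_mem hy, by show a' + _ = _; push_cast; linear_combination -hxy⟩, ?_⟩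
  rintro ⟨z, hz⟩ ⟨y', hy', hyz⟩
  have hmem : z - x ∈ H ⊓ H' := by
    constructor
    · exact H.sub_mem hz hx
    · have : a' + y' = a + z := hyz
      have hzx : z - x = y' + y := by linear_combination -this - hxy
      rw [hzx]; exact H'.add_mem hy' hy
  rw [hbot] at hmem
  have : z = x := by have := Submodule.mem_bot (ZMod p) |>.mp hmem; linear_combination this
  exact Subtype.ext this

lemma card_dir {p : ℕ} [NeZero p] (hp : p.Prime) {H : Submodule (ZMod p) (ZMod p × ZMod p)}
    (h1 : finrank (ZMod p) H = 1) : Fintype.card H = p := by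
  haveI := Fact.mk hp
  rw [card_eq_pow_finrank (K := ZMod p) (V := H), h1, ZMod.card, pow_one]

lemma sum_indicator_count {p : ℕ} [NeZero p] {α : Type*} [Fintype α]
    (l : Set (ZMod p × ZMod p)) (g : α → ZMod p × ZMod p) :
    ∑ x : α, l.indicator (1 : (ZMod p × ZMod p) → ℝ) (g x)
      = (univ.filter (fun x => g x ∈ l)).card := by
  simp [Set.indicator_apply, Finset.sum_boole]

lemma sum_one {p : ℕ} [NeZero p] (hp : p.Prime)
    {H H' : Submodule (ZMod p) (ZMod p × ZMod p)}
    (h1 : finrank (ZMod p) H = 1) (h1' : finrank (ZMod p) H' = 1) (hne : H ≠ H')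
    (a a' : ZMod p × ZMod p) :
    ∑ h : H, ((a' + ·) '' (H' : Set (ZMod p × ZMod p))).indicator
      (1 : (ZMod p × ZMod p) → ℝ) (a + (h : ZMod p × ZMod p)) = 1 := by
  rw [sum_indicator_count]
  obtain ⟨h₀, hmem, huniq⟩ := unique_point hp h1 h1' hne a a'
  have hfil : (univ.filter (fun h : H =>
      a + (h : ZMod p × ZMod p) ∈ (a' + ·) '' (H' : Set (ZMod p × ZMod p)))) = {h₀} := by
    apply Finset.eq_singleton_iff_unique_mem.mpr
    refine ⟨by simpa using hmem, fun x hx => huniq x (by simpa using hx)⟩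
  rw [hfil]; simp

lemma sum_full {p : ℕ} [NeZero p] (hp : p.Prime)
    {H : Submodule (ZMod p) (ZMod p × ZMod p)}
    (h1 : finrank (ZMod p) H = 1) (a : ZMod p × ZMod p) :
    ∑ h : H, ((a + ·) '' (H : Set (ZMod p × ZMod p))).indicator
      (1 : (ZMod p × ZMod p) → ℝ) (a + (h : ZMod p × ZMod p)) = p := by
  rw [sum_indicator_count]
  have hfil : (univ.filter (fun h : H =>
      a + (h : ZMod p × ZMod p) ∈ (a + ·) '' (H : Set (ZMod p × ZMod p)))) = univ :=
    Finset.filter_true_of_mem (fun h _ => ⟨h, h.2, rfl⟩)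
  rw [hfil, Finset.card_univ, card_dir hp h1]

theorem stmt6 (p : ℕ) (hp : p.Prime) (hp3 : 3 ≤ p) [NeZero p]
    (a₁ a₂ : ZMod p × ZMod p) (H₁ H₂ : Submodule (ZMod p) (ZMod p × ZMod p))
    (hH₁ : Module.finrank (ZMod p) H₁ = 1) (hH₂ : Module.finrank (ZMod p) H₂ = 1)
    (hne : H₁ ≠ H₂)
    (l₁ l₂ : Set (ZMod p × ZMod p))
    (hl₁ : l₁ = (a₁ + ·) '' (H₁ : Set (ZMod p × ZMod p)))
    (hl₂ : l₂ = (a₂ + ·) '' (H₂ : Set (ZMod p × ZMod p)))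
    (w : ZMod p × ZMod p → ℝ) (hw : w = l₁.indicator 1 - l₂.indicator 1) :
    Function.support w = (l₁ ∪ l₂) \ (l₁ ∩ l₂) ∧
      (Function.support w).ncard = 2 * (p - 1) ∧
      ∀ H : Submodule (ZMod p) (ZMod p × ZMod p), Module.finrank (ZMod p) H = 1 →
        (IsPerfect p w H ↔ H ≠ H₁ ∧ H ≠ H₂) := by
  haveI := Fact.mk hp
  have hsupp : Function.support w = (l₁ ∪ l₂) \ (l₁ ∩ l₂) := by
    ext x
    simp only [Function.mem_support, hw, Pi.sub_apply, Set.mem_diff, Set.mem_union,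
      Set.mem_inter_iff]
    by_cases h1 : x ∈ l₁ <;> by_cases h2 : x ∈ l₂ <;>
      simp [Set.indicator_apply, h1, h2]
  have hcard : ∀ (a : ZMod p × ZMod p) (H : Submodule (ZMod p) (ZMod p × ZMod p)),
      Module.finrank (ZMod p) H = 1 → ((a + ·) '' (H : Set (ZMod p × ZMod p))).ncard = p := by
    intro a H h1
    rw [Set.ncard_image_of_injective _ (add_right_injective a), ← Nat.card_coe_set_eq]
    simp only [SetLike.coe_sort_coe]
    rw [Nat.card_eq_fintype_card, card_dir hp h1]
  have hc1 : l₁.ncard = p := by rw [hl₁]; exact hcard a₁ H₁ hH₁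
  have hc2 : l₂.ncard = p := by rw [hl₂]; exact hcard a₂ H₂ hH₂
  obtain ⟨h₀, hh₀, huniq⟩ := unique_point hp hH₁ hH₂ hne a₁ a₂
  have hinter : l₁ ∩ l₂ = {a₁ + (h₀ : ZMod p × ZMod p)} := by
    ext x
    simp only [Set.mem_inter_iff, Set.mem_singleton_iff]
    constructor
    · rintro ⟨hx1, hx2⟩
      rw [hl₁] at hx1
      obtain ⟨y, hy, rfl⟩ := hx1
      have heq : (⟨y, hy⟩ : H₁) = h₀ := huniq ⟨y, hy⟩ (by rw [hl₂] at hx2; exact hx2)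
      show a₁ + y = a₁ + (h₀ : ZMod p × ZMod p)
      rw [← congrArg Subtype.val heq]
    · rintro rfl
      exact ⟨by rw [hl₁]; exact ⟨h₀, h₀.2, rfl⟩, by rw [hl₂]; exact hh₀⟩
  have hinterc : (l₁ ∩ l₂).ncard = 1 := by rw [hinter]; simp
  have hsuppc : (Function.support w).ncard = 2 * (p - 1) := by
    rw [hsupp]
    have hsub : l₁ ∩ l₂ ⊆ l₁ ∪ l₂ := (Set.inter_subset_left).trans Set.subset_union_left
    rw [Set.ncard_diff hsub]
    have huni := Set.ncard_union_add_ncard_inter l₁ l₂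
    omega
  have htot : ∑ z : ZMod p × ZMod p, w z = 0 := by
    have key : ∀ (l : Set (ZMod p × ZMod p)), l.ncard = p →
        ∑ z : ZMod p × ZMod p, l.indicator (1 : (ZMod p × ZMod p) → ℝ) z = p := by
      intro l hl
      have h1 : ∑ z : ZMod p × ZMod p, l.indicator (1 : (ZMod p × ZMod p) → ℝ) z
          = ((univ.filter (fun z => z ∈ l)).card : ℝ) := by
        simp [Set.indicator_apply, Finset.sum_boole]
      rw [h1, Set.filter_mem_univ_eq_toFinset, Set.toFinset_card,
        ← Nat.card_eq_fintype_card, Nat.card_coe_set_eq, hl]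
    rw [hw]
    simp only [Pi.sub_apply]
    rw [Finset.sum_sub_distrib, key l₁ hc1, key l₂ hc2, sub_self]
  refine ⟨hsupp, hsuppc, fun H h1 => ⟨fun hperf => ?_, fun ⟨hn1, hn2⟩ a => ?_⟩⟩
  · constructor
    · rintro rfl
      have := hperf a₁
      rw [htot, zero_div, hw] at this
      simp only [Pi.sub_apply] at this
      rw [Finset.sum_sub_distrib, hl₁, hl₂, sum_full hp h1 a₁,
        sum_one hp h1 hH₂ hne a₁ a₂] at this
      have hp1 : (p : ℝ) = 1 := by linarith
      have : p = 1 := by exact_mod_cast hp1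
      omega
    · rintro rfl
      have := hperf a₂
      rw [htot, zero_div, hw] at this
      simp only [Pi.sub_apply] at this
      rw [Finset.sum_sub_distrib, hl₁, hl₂, sum_one hp h1 hH₁ hne.symm a₂ a₁,
        sum_full hp h1 a₂] at this
      have hp1 : (p : ℝ) = 1 := by linarith
      have : p = 1 := by exact_mod_cast hp1
      omega
  · rw [htot, zero_div, hw]
    simp only [Pi.sub_apply]
    rw [Finset.sum_sub_distrib, hl₁, hl₂, sum_one hp h1 hH₁ hn1 a a₁,
      sum_one hp h1 hH₂ hn2 a a₂, sub_self]
end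

section
/- Let p be an odd prime and w : F_p^2 → ℂ. If N directions are perfect with respect to w, then |supp ŵ| ≤ (p−1)(p+1−N) + 1, where ŵ is the Fourier transform of w on F_p^2. -/
open scoped Classical

/-- The Fourier transform of `w : F_p^2 → ℂ` at an additive character `χ`:
`ŵ(χ) = (1/p²) ∑_z w(z) * conj(χ(z))`. -/
noncomputable def ft (p : ℕ) [NeZero p] (w : ZMod p × ZMod p → ℂ)
    (χ : AddChar (ZMod p × ZMod p) ℂ) : ℂ :=
  (1 / (p : ℂ) ^ 2) * ∑ z : ZMod p × ZMod p, w z * (starRingEnd ℂ) (χ z)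

/-- Perfect direction for a complex-valued weight. -/
def IsPerfectC (p : ℕ) [NeZero p] (w : ZMod p × ZMod p → ℂ)
    (H : Submodule (ZMod p) (ZMod p × ZMod p)) : Prop :=
  ∀ a : ZMod p × ZMod p,
    ∑ h : H, w (a + (h : ZMod p × ZMod p)) = (∑ z : ZMod p × ZMod p, w z) / p

/-- Auxiliary: a one-dimensional subspace is the kernel of a surjective functional. -/
lemma aux_phi (p : ℕ) (hp : p.Prime) [NeZero p] (H : Submodule (ZMod p) (ZMod p × ZMod p))
    (hH : Module.finrank (ZMod p) H = 1) :
    ∃ φ : (ZMod p × ZMod p) →ₗ[ZMod p] ZMod p, Function.Surjective φ ∧ LinearMap.ker φ = H := by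
  haveI := Fact.mk hp
  have h2 : Module.finrank (ZMod p) (ZMod p × ZMod p) = 2 := by simp [Module.finrank_prod]
  have hq : Module.finrank (ZMod p) ((ZMod p × ZMod p) ⧸ H) = 1 := by
    have := Submodule.finrank_quotient_add_finrank H
    omega
  obtain ⟨e⟩ := FiniteDimensional.nonempty_linearEquiv_of_finrank_eq
    (hq.trans (Module.finrank_self (ZMod p)).symm)
  refine ⟨e.toLinearMap.comp H.mkQ, e.surjective.comp H.mkQ_surjective, ?_⟩
  rw [LinearMap.ker_comp, LinearEquiv.ker, Submodule.comap_bot, Submodule.ker_mkQ]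

/-- Auxiliary: the Fourier transform vanishes at nontrivial characters trivial on a
perfect direction. -/
lemma aux_vanish (p : ℕ) (hp : p.Prime) [NeZero p] (w : ZMod p × ZMod p → ℂ)
    (H : Submodule (ZMod p) (ZMod p × ZMod p)) (hperf : IsPerfectC p w H)
    (φ : (ZMod p × ZMod p) →ₗ[ZMod p] ZMod p) (hsurj : Function.Surjective φ)
    (hker : LinearMap.ker φ = H)
    (χ : AddChar (ZMod p × ZMod p) ℂ) (hχ : χ ≠ 1) (htriv : ∀ h ∈ H, χ h = 1) :
    ft p w χ = 0 := by
  haveI := Fact.mk hp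
  obtain ⟨u, hu⟩ := hsurj 1
  have hφu : ∀ t : ZMod p, φ (t • u) = t := by
    intro t; rw [map_smul, hu, smul_eq_mul, mul_one]
  let e : ZMod p × H ≃ (ZMod p × ZMod p) :=
    { toFun := fun th => th.1 • u + (th.2 : ZMod p × ZMod p)
      invFun := fun z => (φ z, ⟨z - φ z • u, by
        rw [← hker]; simp [LinearMap.mem_ker, hφu]⟩)
      left_inv := by
        rintro ⟨t, h, hh⟩
        have hφh : φ h = 0 := by rw [← LinearMap.mem_ker, hker]; exact hh
        have : φ (t • u + h) = t := by rw [map_add, hφu, hφh, add_zero]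
        ext <;> simp [this]
      right_inv := fun z => by simp }
  have hconst : ∀ (t : ZMod p) (h : H), χ (t • u + (h : ZMod p × ZMod p)) = χ (t • u) := by
    intro t h
    rw [AddChar.map_add_eq_mul, htriv h h.2, mul_one]
  have key : ∑ z : ZMod p × ZMod p, w z * (starRingEnd ℂ) (χ z)
      = ((∑ z : ZMod p × ZMod p, w z) / p) * ∑ t : ZMod p, (starRingEnd ℂ) (χ (t • u)) := by
    rw [← Equiv.sum_comp e (fun z => w z * (starRingEnd ℂ) (χ z)), Fintype.sum_prod_type]
    simp only [e, Equiv.coe_fn_mk, hconst]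
    rw [Finset.mul_sum]
    refine Finset.sum_congr rfl fun t _ => ?_
    rw [← Finset.sum_mul, hperf (t • u)]
  let s : ZMod p →+ (ZMod p × ZMod p) :=
    { toFun := fun t => t • u
      map_zero' := by simp
      map_add' := fun a b => add_smul a b u }
  let χ' : AddChar (ZMod p) ℂ := χ.compAddMonoidHom s
  have hχ' : χ' ≠ 0 := by
    rw [AddChar.ne_zero_iff]
    obtain ⟨z, hz⟩ := AddChar.ne_one_iff.mp hχ
    refine ⟨φ z, ?_⟩
    have hz2 : z - φ z • u ∈ H := by rw [← hker]; simp [LinearMap.mem_ker, hφu]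
    have : χ z = χ (φ z • u) := by
      have h1 := htriv _ hz2
      calc χ z = χ (φ z • u + (z - φ z • u)) := by ring_nf
        _ = χ (φ z • u) * χ (z - φ z • u) := AddChar.map_add_eq_mul χ _ _
        _ = χ (φ z • u) := by rw [h1, mul_one]
    simpa [χ', s, AddChar.compAddMonoidHom] using this ▸ hz
  have hsum : ∑ t : ZMod p, χ' t = 0 := AddChar.sum_eq_zero_iff_ne_zero.mpr hχ'
  have hsum' : ∑ t : ZMod p, (starRingEnd ℂ) (χ (t • u)) = 0 := by
    have : ∑ t : ZMod p, (starRingEnd ℂ) (χ' t) = 0 := by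
      rw [← map_sum, hsum, map_zero]
    simpa [χ', s, AddChar.compAddMonoidHom] using this
  rw [ft, key, hsum', mul_zero, mul_zero]

/-- Auxiliary: there are at least `p - 1` nontrivial characters trivial on `H`. -/
lemma aux_count (p : ℕ) (hp : p.Prime) [NeZero p]
    (H : Submodule (ZMod p) (ZMod p × ZMod p))
    (φ : (ZMod p × ZMod p) →ₗ[ZMod p] ZMod p) (hsurj : Function.Surjective φ)
    (hker : LinearMap.ker φ = H) :
    p - 1 ≤ (Finset.univ.filter
      (fun χ : AddChar (ZMod p × ZMod p) ℂ => χ ≠ 1 ∧ ∀ h ∈ H, χ h = 1)).card := by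
  haveI := Fact.mk hp
  obtain ⟨u, hu⟩ := hsurj 1
  have hζ := Complex.isPrimitiveRoot_exp p (NeZero.ne p)
  set ζ := Complex.exp (2 * Real.pi * Complex.I / p) with hζdef
  have hζp : ζ ^ p = 1 := hζ.pow_eq_one
  have hζ0 : ζ ≠ 0 := hζ.ne_zero (NeZero.ne p)
  let ψ : AddChar (ZMod p) ℂ := AddChar.zmodChar p hζp
  have hψ : ψ.IsPrimitive := AddChar.zmodChar_primitive_of_primitive_root p hζ
  have hψ1 : ∀ a : ZMod p, ψ a = 1 ↔ a = 0 := fun a => hψ.zmod_char_eq_one_iff p a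
  have hψ0 : ∀ a : ZMod p, ψ a ≠ 0 := fun a => pow_ne_zero _ hζ0
  let m : ZMod p → AddChar (ZMod p × ZMod p) ℂ := fun c =>
    ψ.compAddMonoidHom ((AddMonoidHom.mulLeft c).comp φ.toAddMonoidHom)
  have hm : ∀ c z, m c z = ψ (c * φ z) := fun c z => rfl
  have hinj : Function.Injective m := by
    intro c c' h
    have h1 : ψ c = ψ c' := by
      have := DFunLike.congr_fun h u
      rwa [hm, hm, hu, mul_one, mul_one] at this
    have h2 : ψ (c - c') = 1 := by
      rw [AddChar.map_sub_eq_div, h1, div_self (hψ0 c')]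
    exact sub_eq_zero.mp ((hψ1 _).mp h2)
  have hsub : (Finset.univ.filter (fun c : ZMod p => c ≠ 0)).image m ⊆
      Finset.univ.filter
        (fun χ : AddChar (ZMod p × ZMod p) ℂ => χ ≠ 1 ∧ ∀ h ∈ H, χ h = 1) := by
    intro χ hχ
    simp only [Finset.mem_image, Finset.mem_filter, Finset.mem_univ, true_and] at hχ ⊢
    obtain ⟨c, hc, rfl⟩ := hχ
    constructor
    · rw [AddChar.ne_one_iff]
      exact ⟨u, by rw [hm, hu, mul_one]; exact fun h => hc ((hψ1 c).mp h)⟩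
    · intro h hh
      have : φ h = 0 := by rw [← LinearMap.mem_ker, hker]; exact hh
      rw [hm, this, mul_zero, AddChar.map_zero_eq_one]
  calc p - 1 = (Finset.univ.filter (fun c : ZMod p => c ≠ 0)).card := by
        rw [Finset.filter_ne']
        simp [Finset.card_erase_of_mem, ZMod.card]
    _ = ((Finset.univ.filter (fun c : ZMod p => c ≠ 0)).image m).card :=
        (Finset.card_image_of_injective _ hinj).symm
    _ ≤ _ := Finset.card_le_card hsub

/-- Auxiliary: a character trivial on two distinct one-dimensional subspaces is trivial. -/
lemma aux_disj (p : ℕ) (hp : p.Prime) [NeZero p]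
    (H H' : Submodule (ZMod p) (ZMod p × ZMod p))
    (h1 : Module.finrank (ZMod p) H = 1) (h1' : Module.finrank (ZMod p) H' = 1)
    (hne : H ≠ H') (χ : AddChar (ZMod p × ZMod p) ℂ)
    (ht : ∀ h ∈ H, χ h = 1) (ht' : ∀ h ∈ H', χ h = 1) : χ = 1 := by
  haveI := Fact.mk hp
  have h2 : Module.finrank (ZMod p) (ZMod p × ZMod p) = 2 := by simp [Module.finrank_prod]
  have hlt : H < H ⊔ H' := by
    rcases lt_or_eq_of_le (le_sup_left : H ≤ H ⊔ H') with h | h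
    · exact h
    · exact absurd (Submodule.eq_of_le_of_finrank_le (h ▸ le_sup_right : H' ≤ H)
        (by omega)).symm hne
  have htop : H ⊔ H' = ⊤ := by
    apply Submodule.eq_top_of_finrank_eq
    have hlt2 := Submodule.finrank_lt_finrank_of_lt hlt
    have hle := Submodule.finrank_le (H ⊔ H')
    omega
  rw [AddChar.eq_one_iff]
  intro z
  have hz : z ∈ H ⊔ H' := htop ▸ Submodule.mem_top
  obtain ⟨a, ha, b, hb, rfl⟩ := Submodule.mem_sup.mp hz
  rw [AddChar.map_add_eq_mul, ht a ha, ht' b hb, mul_one]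

theorem stmt9 (p : ℕ) (hp : p.Prime) (hodd : Odd p) [NeZero p]
    (w : ZMod p × ZMod p → ℂ) (N : ℕ)
    (D : Set (Submodule (ZMod p) (ZMod p × ZMod p)))
    (hD : ∀ H ∈ D, Module.finrank (ZMod p) H = 1 ∧ IsPerfectC p w H)
    (hN : D.ncard = N) :
    {χ : AddChar (ZMod p × ZMod p) ℂ | ft p w χ ≠ 0}.ncard ≤
      (p - 1) * (p + 1 - N) + 1 := by
  haveI := Fact.mk hp
  haveI : Finite (Submodule (ZMod p) (ZMod p × ZMod p)) :=
    Finite.of_injective (fun H : Submodule (ZMod p) (ZMod p × ZMod p) => (H : Set (ZMod p × ZMod p))) SetLike.coe_injective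
  have hDfin : D.Finite := Set.toFinite D
  set Dfin := hDfin.toFinset with hDfin_def
  have hDmem : ∀ H, H ∈ Dfin ↔ H ∈ D := fun H => hDfin.mem_toFinset
  have hDcard : Dfin.card = N := by rw [← hN, Set.ncard_eq_toFinset_card D hDfin]
  set A := fun H : Submodule (ZMod p) (ZMod p × ZMod p) =>
    Finset.univ.filter
      (fun χ : AddChar (ZMod p × ZMod p) ℂ => χ ≠ 1 ∧ ∀ h ∈ H, χ h = 1) with hA
  set U := Dfin.biUnion A with hU_def
  -- disjointness
  have hdisjoint : ∀ H ∈ Dfin, ∀ H' ∈ Dfin, H ≠ H' → Disjoint (A H) (A H') := by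
    intro H hH H' hH' hne
    rw [Finset.disjoint_left]
    intro χ hχ hχ'
    rw [hA, Finset.mem_filter] at hχ hχ'
    exact hχ.2.1 (aux_disj p hp H H' ((hD H ((hDmem H).mp hH)).1)
      ((hD H' ((hDmem H').mp hH')).1) hne χ hχ.2.2 hχ'.2.2)
  have hUcard : U.card = ∑ H ∈ Dfin, (A H).card := Finset.card_biUnion hdisjoint
  -- lower bound on U
  have hUge : N * (p - 1) ≤ U.card := by
    rw [hUcard, ← hDcard]
    calc Dfin.card * (p - 1) = ∑ _H ∈ Dfin, (p - 1) := by
          rw [Finset.sum_const, smul_eq_mul]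
      _ ≤ ∑ H ∈ Dfin, (A H).card := Finset.sum_le_sum fun H hH => by
          obtain ⟨φ, hsurj, hker⟩ := aux_phi p hp H (hD H ((hDmem H).mp hH)).1
          exact aux_count p hp H φ hsurj hker
  -- support is disjoint from U
  set S := Finset.univ.filter
    (fun χ : AddChar (ZMod p × ZMod p) ℂ => ft p w χ ≠ 0) with hS_def
  have hSU : Disjoint S U := by
    rw [Finset.disjoint_left]
    intro χ hχ hχU
    rw [hS_def, Finset.mem_filter] at hχ
    obtain ⟨H, hH, hχA⟩ := Finset.mem_biUnion.mp hχU
    rw [hA, Finset.mem_filter] at hχA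
    obtain ⟨φ, hsurj, hker⟩ := aux_phi p hp H (hD H ((hDmem H).mp hH)).1
    exact hχ.2 (aux_vanish p hp w H (hD H ((hDmem H).mp hH)).2 φ hsurj hker χ
      hχA.2.1 hχA.2.2)
  -- the trivial character is not in U
  have hone : (1 : AddChar (ZMod p × ZMod p) ℂ) ∉ U := by
    intro h
    obtain ⟨H, _, hA1⟩ := Finset.mem_biUnion.mp h
    rw [hA, Finset.mem_filter] at hA1
    exact hA1.2.1 rfl
  have hcard : Fintype.card (AddChar (ZMod p × ZMod p) ℂ) ≤ p * p := by
    have h := AddChar.card_addChar_le (ZMod p × ZMod p) ℂ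
    rwa [Fintype.card_prod, ZMod.card] at h
  -- cardinality facts
  have hSUcard : S.card + U.card ≤ p * p := by
    calc S.card + U.card = (S ∪ U).card := (Finset.card_union_of_disjoint hSU).symm
      _ ≤ Fintype.card (AddChar (ZMod p × ZMod p) ℂ) := Finset.card_le_univ _
      _ ≤ p * p := hcard
  have hU1 : U.card + 1 ≤ p * p := by
    have : (insert (1 : AddChar (ZMod p × ZMod p) ℂ) U).card = U.card + 1 :=
      Finset.card_insert_of_notMem hone
    calc U.card + 1 = (insert 1 U).card := this.symm
      _ ≤ Fintype.card (AddChar (ZMod p × ZMod p) ℂ) := Finset.card_le_univ _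
      _ ≤ p * p := hcard
  -- N ≤ p + 1
  have hp1 : 1 ≤ p := hp.one_lt.le
  have c1 : (N : ℤ) * ((p : ℤ) - 1) ≤ (U.card : ℤ) := by
    have := hUge; zify [hp1] at this; linarith
  have c2 : (S.card : ℤ) + (U.card : ℤ) ≤ (p : ℤ) * p := by exact_mod_cast hSUcard
  have c3 : (U.card : ℤ) + 1 ≤ (p : ℤ) * p := by exact_mod_cast hU1
  have hNle : N ≤ p + 1 := by
    have hz : (N : ℤ) * ((p : ℤ) - 1) ≤ ((p : ℤ) + 1) * ((p : ℤ) - 1) := by nlinarith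
    have hppos : (0 : ℤ) < (p : ℤ) - 1 := by
      have h2 : (2 : ℤ) ≤ (p : ℤ) := by exact_mod_cast hp.two_le
      linarith
    have := le_of_mul_le_mul_right hz hppos
    exact_mod_cast this
  -- convert ncard to the filter card
  have hncard : {χ : AddChar (ZMod p × ZMod p) ℂ | ft p w χ ≠ 0}.ncard = S.card := by
    rw [hS_def, Set.ncard_eq_toFinset_card', Set.toFinset_setOf]
  rw [hncard]
  zify [hNle, hp1]
  nlinarith [c1, c2]
end

section
/- Let p be an odd prime, S ⊆ F_p^2 with |S| = p+1, and w : F_p^2 → ℝ with supp(w) = S and ∑_z w(z) ≠ 0. Then at most one direction is perfect with respect to w. -/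
open scoped Classical

private lemma struct_aux (p : ℕ) (hp : p.Prime) [NeZero p]
    (w : ZMod p × ZMod p → ℝ)
    (hcard : (Function.support w).ncard = p + 1)
    (hsum : ∑ z : ZMod p × ZMod p, w z ≠ 0)
    (H : Submodule (ZMod p) (ZMod p × ZMod p))
    (hH : Module.finrank (ZMod p) H = 1)
    (hperf : IsPerfect p w H) :
    ∃ P Q : ZMod p × ZMod p, w P ≠ 0 ∧ w Q ≠ 0 ∧ P ≠ Q ∧ P - Q ∈ H ∧
      w P + w Q = (∑ z : ZMod p × ZMod p, w z) / p ∧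
      ∀ x, w x ≠ 0 → x ≠ P → x ≠ Q →
        w x = (∑ z : ZMod p × ZMod p, w z) / p := by
  classical
  haveI : Fact p.Prime := ⟨hp⟩
  set c : ℝ := (∑ z : ZMod p × ZMod p, w z) / p with hc_def
  have hp0 : (p : ℝ) ≠ 0 := Nat.cast_ne_zero.mpr (NeZero.ne p)
  have hc : c ≠ 0 := div_ne_zero hsum hp0
  set S' : Finset (ZMod p × ZMod p) := Finset.univ.filter (fun x => w x ≠ 0) with hS'
  set fib : ((ZMod p × ZMod p) ⧸ H) → Finset (ZMod p × ZMod p) :=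
    fun q => S'.filter (fun x => Submodule.Quotient.mk x = q) with hfib
  have L1 : ∀ a : ZMod p × ZMod p, ∑ x ∈ fib (Submodule.Quotient.mk a), w x = c := by
    intro a
    have himg : Finset.univ.image (fun h : ↥H => a + (h : ZMod p × ZMod p))
        = Finset.univ.filter (fun x : ZMod p × ZMod p =>
            (Submodule.Quotient.mk x : (ZMod p × ZMod p) ⧸ H) = Submodule.Quotient.mk a) := by
      ext x
      simp only [Finset.mem_image, Finset.mem_filter, Finset.mem_univ, true_and]
      constructor
      · rintro ⟨h, -, rfl⟩
        rw [Submodule.Quotient.eq]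
        simpa using h.2
      · intro hx
        rw [Submodule.Quotient.eq] at hx
        exact ⟨⟨x - a, hx⟩, by ring⟩
    have hinj : ∀ x ∈ (Finset.univ : Finset ↥H), ∀ y ∈ (Finset.univ : Finset ↥H),
        a + (x : ZMod p × ZMod p) = a + (y : ZMod p × ZMod p) → x = y := by
      intro x _ y _ hxy
      exact Subtype.ext (by simpa using hxy)
    have h2 : ∑ x ∈ Finset.univ.filter (fun x : ZMod p × ZMod p =>
          (Submodule.Quotient.mk x : (ZMod p × ZMod p) ⧸ H) = Submodule.Quotient.mk a), w x = c := by
      rw [← himg, Finset.sum_image hinj]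
      exact hperf a
    have h3 : fib (Submodule.Quotient.mk a)
        = (Finset.univ.filter (fun x : ZMod p × ZMod p =>
            (Submodule.Quotient.mk x : (ZMod p × ZMod p) ⧸ H) = Submodule.Quotient.mk a)).filter
            (fun x => w x ≠ 0) := by
      ext x
      simp only [hfib, hS', Finset.mem_filter, Finset.mem_univ, true_and]
      tauto
    rw [h3, Finset.sum_filter_ne_zero]
    exact h2
  have cardH : Nat.card ↥H = p := by
    have h := Module.card_eq_pow_finrank (K := ZMod p) (V := ↥H)
    rw [ZMod.card, hH, pow_one] at h
    rw [Nat.card_eq_fintype_card, h]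
  have cardF : Nat.card (ZMod p × ZMod p) = p * p := by
    simp [Nat.card_eq_fintype_card, ZMod.card]
  have cardQ : Nat.card ((ZMod p × ZMod p) ⧸ H) = p := by
    have h := Submodule.card_eq_card_quotient_mul_card H
    rw [cardF, cardH] at h
    exact (Nat.eq_of_mul_eq_mul_left hp.pos h).symm
  have cardQ' : Fintype.card ((ZMod p × ZMod p) ⧸ H) = p := by
    rw [← Nat.card_eq_fintype_card]; exact cardQ
  have cardS' : S'.card = p + 1 := by
    have h : (Function.support w).toFinset = S' := by
      ext x; simp [hS', Function.mem_support]
    rw [← hcard, Set.ncard_eq_toFinset_card', h]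
  have hcount : ∑ q : (ZMod p × ZMod p) ⧸ H, (fib q).card = p + 1 := by
    rw [← cardS']
    exact (Finset.card_eq_sum_card_fiberwise (fun x _ => Finset.mem_univ
      (Submodule.Quotient.mk x : (ZMod p × ZMod p) ⧸ H))).symm
  have hge1 : ∀ q : (ZMod p × ZMod p) ⧸ H, 1 ≤ (fib q).card := by
    intro q
    obtain ⟨a, rfl⟩ := Submodule.Quotient.mk_surjective H q
    by_contra h
    have h0 : (fib (Submodule.Quotient.mk a)).card = 0 := by omega
    rw [Finset.card_eq_zero] at h0
    have := L1 a
    rw [h0, Finset.sum_empty] at this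
    exact hc this.symm
  have key : ∑ q : (ZMod p × ZMod p) ⧸ H, ((fib q).card - 1) = 1 := by
    have h3 : ∑ q : (ZMod p × ZMod p) ⧸ H, ((fib q).card - 1)
        + ∑ _q : (ZMod p × ZMod p) ⧸ H, (1 : ℕ) = p + 1 := by
      rw [← Finset.sum_add_distrib]
      rw [Finset.sum_congr rfl (fun q _ => Nat.sub_add_cancel (hge1 q))]
      exact hcount
    have h4 : ∑ _q : (ZMod p × ZMod p) ⧸ H, (1 : ℕ) = p := by
      simp [cardQ']
    omega
  obtain ⟨q0, hq0⟩ : ∃ q0 : (ZMod p × ZMod p) ⧸ H, (fib q0).card - 1 ≠ 0 := by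
    by_contra hno
    push_neg at hno
    rw [Finset.sum_eq_zero (fun q _ => hno q)] at key
    omega
  have hg0 : (fib q0).card = 2 := by
    have h := Finset.single_le_sum (f := fun q => (fib q).card - 1)
      (fun i _ => Nat.zero_le _) (Finset.mem_univ q0)
    have h' : (fib q0).card - 1 ≤ 1 := by simpa [key] using h
    have := hge1 q0
    omega
  have hg1 : ∀ q, q ≠ q0 → (fib q).card = 1 := by
    intro q hq
    have hpair := Finset.sum_le_sum_of_subset
      (f := fun q' : (ZMod p × ZMod p) ⧸ H => (fib q').card - 1)
      (Finset.subset_univ ({q0, q} : Finset ((ZMod p × ZMod p) ⧸ H)))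
    rw [Finset.sum_pair (Ne.symm hq)] at hpair
    replace hpair : (fib q0).card - 1 + ((fib q).card - 1) ≤ 1 := by
      simpa [key] using hpair
    have := hge1 q
    omega
  obtain ⟨P, Q, hPQne, hfibq0⟩ := Finset.card_eq_two.mp hg0
  have hPmem : P ∈ fib q0 := by rw [hfibq0]; simp
  have hQmem : Q ∈ fib q0 := by rw [hfibq0]; simp
  have hPdef : w P ≠ 0 ∧ Submodule.Quotient.mk P = q0 := by
    simpa [hfib, hS', Finset.mem_filter] using hPmem
  have hQdef : w Q ≠ 0 ∧ Submodule.Quotient.mk Q = q0 := by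
    simpa [hfib, hS', Finset.mem_filter] using hQmem
  refine ⟨P, Q, hPdef.1, hQdef.1, hPQne, ?_, ?_, ?_⟩
  · exact (Submodule.Quotient.eq H).mp (hPdef.2.trans hQdef.2.symm)
  · have h := L1 P
    rw [hPdef.2, hfibq0, Finset.sum_pair hPQne] at h
    exact h
  · intro x hx hxP hxQ
    have hxq : (Submodule.Quotient.mk x : (ZMod p × ZMod p) ⧸ H) ≠ q0 := by
      intro hEq
      have hmem : x ∈ fib q0 := by
        rw [← hEq]
        simp [hfib, hS', Finset.mem_filter, hx]
      rw [hfibq0] at hmem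
      rcases Finset.mem_insert.mp hmem with h | h
      · exact hxP h
      · exact hxQ (Finset.mem_singleton.mp h)
    obtain ⟨y, hy⟩ := Finset.card_eq_one.mp (hg1 _ hxq)
    have hxmem : x ∈ fib (Submodule.Quotient.mk x) := by
      simp [hfib, hS', Finset.mem_filter, hx]
    rw [hy, Finset.mem_singleton] at hxmem
    have h := L1 x
    rw [hy, Finset.sum_singleton, ← hxmem] at h
    exact h

theorem stmt13 (p : ℕ) (hp : p.Prime) (hodd : Odd p) [NeZero p]
    (S : Set (ZMod p × ZMod p)) (hcard : S.ncard = p + 1)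
    (w : ZMod p × ZMod p → ℝ) (hsupp : Function.support w = S)
    (hsum : ∑ z : ZMod p × ZMod p, w z ≠ 0) :
    ∀ H₁ H₂ : Submodule (ZMod p) (ZMod p × ZMod p),
      Module.finrank (ZMod p) H₁ = 1 → Module.finrank (ZMod p) H₂ = 1 →
      IsPerfect p w H₁ → IsPerfect p w H₂ → H₁ = H₂ := by
  intro H₁ H₂ h1 h2 hp1 hp2
  classical
  haveI : Fact p.Prime := ⟨hp⟩
  have hsupp' : (Function.support w).ncard = p + 1 := by rw [hsupp]; exact hcard
  obtain ⟨P, Q, hwP, hwQ, hPQ, hPQH, hsumPQ, hrest1⟩ :=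
    struct_aux p hp w hsupp' hsum H₁ h1 hp1
  obtain ⟨R, R', hwR, hwR', hRR', hRRH, hsumRR, hrest2⟩ :=
    struct_aux p hp w hsupp' hsum H₂ h2 hp2
  have hp0 : (p : ℝ) ≠ 0 := Nat.cast_ne_zero.mpr (NeZero.ne p)
  have hc : (∑ z : ZMod p × ZMod p, w z) / p ≠ 0 := div_ne_zero hsum hp0
  have span_eq : ∀ v : ZMod p × ZMod p, v ≠ 0 → v ∈ H₁ → v ∈ H₂ → H₁ = H₂ := by
    intro v hv hv1 hv2
    have hle1 : Submodule.span (ZMod p) ({v} : Set (ZMod p × ZMod p)) ≤ H₁ :=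
      Submodule.span_le.mpr (Set.singleton_subset_iff.mpr hv1)
    have hle2 : Submodule.span (ZMod p) ({v} : Set (ZMod p × ZMod p)) ≤ H₂ :=
      Submodule.span_le.mpr (Set.singleton_subset_iff.mpr hv2)
    have e1 : Submodule.span (ZMod p) ({v} : Set (ZMod p × ZMod p)) = H₁ :=
      Submodule.eq_of_le_of_finrank_eq hle1
        (by rw [finrank_span_singleton hv, h1])
    have e2 : Submodule.span (ZMod p) ({v} : Set (ZMod p × ZMod p)) = H₂ :=
      Submodule.eq_of_le_of_finrank_eq hle2
        (by rw [finrank_span_singleton hv, h2])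
    exact e1.symm.trans e2
  by_cases hP : P = R ∨ P = R'
  · by_cases hQ : Q = R ∨ Q = R'
    · have hv2 : P - Q ∈ H₂ := by
        rcases hP with rfl | rfl <;> rcases hQ with rfl | rfl
        · exact absurd rfl hPQ
        · exact hRRH
        · rw [← neg_sub]; exact Submodule.neg_mem _ hRRH
        · exact absurd rfl hPQ
      exact span_eq (P - Q) (sub_ne_zero.mpr hPQ) hPQH hv2
    · push_neg at hQ
      have hQc : w Q = (∑ z : ZMod p × ZMod p, w z) / p := hrest2 Q hwQ hQ.1 hQ.2
      have : w P = 0 := by linarith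
      exact absurd this hwP
  · push_neg at hP
    have hPc : w P = (∑ z : ZMod p × ZMod p, w z) / p := hrest2 P hwP hP.1 hP.2
    have : w Q = 0 := by linarith
    exact absurd this hwQ
end

section
/- Let p ≥ 5 be prime. Define w : F_p^2 → ℝ by w(z) = 1/2 for z ∈ {(0,0),(0,1),(1,0),(1,1)}, w((x,x)) = 1 for x ∈ {2,...,p−1}, and w = 0 otherwise. Then |supp w| = p+2, ∑_z w(z) = p ≠ 0, and there are exactly two perfect directions with respect to w (the horizontal and vertical directions). -/
open scoped Classical

set_option linter.unusedSectionVars false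


section Helpers
variable {p : ℕ} [NeZero p] [Fact p.Prime]

lemma sum_pt (b : ZMod p) (r : ℝ) : ∑ t : ZMod p, (if t = b then r else 0) = r := by
  simp [Finset.sum_ite_eq']

lemma sum_ite_iff (c d : ZMod p → Prop) [∀ t, Decidable (c t)] [∀ t, Decidable (d t)]
    (h : ∀ t, c t ↔ d t) (r : ℝ) :
    ∑ t : ZMod p, (if c t then r else 0) = ∑ t : ZMod p, (if d t then r else 0) :=
  Finset.sum_congr rfl fun t _ => if_congr (h t) rfl rfl

lemma sum_shift (a b : ZMod p) (r : ℝ) :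
    ∑ t : ZMod p, (if a + t = b then r else 0) = r := by
  have hiff : ∀ t : ZMod p, a + t = b ↔ t = b - a := by
    intro t
    constructor
    · intro h; rw [← h]; ring
    · intro h; rw [h]; ring
  rw [sum_ite_iff _ (fun t => t = b - a) hiff]
  exact sum_pt _ r

lemma sum_shift' (a b : ZMod p) (r : ℝ) :
    ∑ t : ZMod p, (if b = a + t then r else 0) = r := by
  rw [sum_ite_iff _ (fun t => a + t = b) (fun t => eq_comm)]
  exact sum_shift a b r

lemma sum_shift_and (a b : ZMod p) (P : Prop) [Decidable P] (r : ℝ) :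
    ∑ t : ZMod p, (if a + t = b ∧ P then r else 0) = if P then r else 0 := by
  by_cases hP : P
  · simp only [hP, and_true, if_true]; exact sum_shift a b r
  · simp [hP]

lemma sum_and_shift (a b : ZMod p) (P : Prop) [Decidable P] (r : ℝ) :
    ∑ t : ZMod p, (if P ∧ a + t = b then r else 0) = if P then r else 0 := by
  rw [sum_ite_iff _ (fun t => a + t = b ∧ P) (fun t => and_comm)]
  exact sum_shift_and a b P r

lemma span_sum (v : ZMod p × ZMod p) (hv : v ≠ 0) (f : ZMod p × ZMod p → ℝ) :
    ∑ h : (Submodule.span (ZMod p) {v}), f h = ∑ t : ZMod p, f (t • v) := by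
  symm
  apply Fintype.sum_bijective
    (fun t : ZMod p => (⟨t • v, Submodule.smul_mem _ _ (Submodule.mem_span_singleton_self v)⟩ :
      Submodule.span (ZMod p) {v}))
  · constructor
    · intro s t hst
      have h1 : s • v = t • v := congrArg Subtype.val hst
      have h2 : (s - t) • v = 0 := by rw [sub_smul, h1, sub_self]
      rcases smul_eq_zero.mp h2 with h | h
      · exact sub_eq_zero.mp h
      · exact absurd h hv
    · rintro ⟨x, hx⟩
      obtain ⟨c, hc⟩ := Submodule.mem_span_singleton.mp hx
      exact ⟨c, Subtype.ext hc⟩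
  · intro t; rfl

lemma rank_one_gen (H : Submodule (ZMod p) (ZMod p × ZMod p))
    (h : Module.finrank (ZMod p) H = 1) :
    ∃ v : ZMod p × ZMod p, v ≠ 0 ∧ H = Submodule.span (ZMod p) {v} := by
  rw [finrank_eq_one_iff'] at h
  obtain ⟨⟨v, hvH⟩, hv0, hspan⟩ := h
  refine ⟨v, by simpa using hv0, le_antisymm ?_ ?_⟩
  · intro x hx
    obtain ⟨c, hc⟩ := hspan ⟨x, hx⟩
    rw [Submodule.mem_span_singleton]
    exact ⟨c, congrArg Subtype.val hc⟩
  · rw [Submodule.span_le, Set.singleton_subset_iff]; exact hvH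

end Helpers

theorem stmt14 (p : ℕ) (hp : p.Prime) (hp5 : 5 ≤ p) [NeZero p]
    (w : ZMod p × ZMod p → ℝ)
    (hw : ∀ z : ZMod p × ZMod p,
      w z = if z = (0, 0) ∨ z = (0, 1) ∨ z = (1, 0) ∨ z = (1, 1) then 1 / 2
            else if z.1 = z.2 then 1 else 0) :
    (Function.support w).ncard = p + 2 ∧
    (∑ z : ZMod p × ZMod p, w z = p) ∧ (p : ℝ) ≠ 0 ∧
    ∀ H : Submodule (ZMod p) (ZMod p × ZMod p), Module.finrank (ZMod p) H = 1 →
      (IsPerfect p w H ↔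
        H = Submodule.span (ZMod p) {((1 : ZMod p), (0 : ZMod p))} ∨
        H = Submodule.span (ZMod p) {((0 : ZMod p), (1 : ZMod p))}) := by
  haveI : Fact p.Prime := ⟨hp⟩
  have hp0 : (p : ℝ) ≠ 0 := Nat.cast_ne_zero.mpr (NeZero.ne p)
  have h01 : (0 : ZMod p) ≠ 1 := zero_ne_one
  -- decomposition of w
  have hw2 : ∀ z : ZMod p × ZMod p, w z =
      (if z.1 = z.2 then (1:ℝ) else 0)
      + (if z = (0, 1) then (1/2 : ℝ) else 0)
      + (if z = (1, 0) then (1/2 : ℝ) else 0)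
      - (if z = (0, 0) then (1/2 : ℝ) else 0)
      - (if z = (1, 1) then (1/2 : ℝ) else 0) := by
    intro z
    rw [hw z]
    by_cases h1 : z = (0, 0)
    · subst h1; simp [Prod.ext_iff, h01, h01.symm]; norm_num
    · by_cases h2 : z = (0, 1)
      · subst h2; simp [Prod.ext_iff, h01, h01.symm]
      · by_cases h3 : z = (1, 0)
        · subst h3; simp [Prod.ext_iff, h01, h01.symm]
        · by_cases h4 : z = (1, 1)
          · subst h4; simp [Prod.ext_iff, h01, h01.symm]; norm_num
          · have h1' : z ≠ 0 := by rwa [← Prod.mk_zero_zero]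
            have h4' : z ≠ 1 := by rwa [← Prod.mk_one_one]
            simp [h1, h2, h3, h4, h1', h4']
  -- splitting sums
  have hsplit : ∀ g : ZMod p → ZMod p × ZMod p,
      ∑ t : ZMod p, w (g t) =
        (∑ t : ZMod p, if (g t).1 = (g t).2 then (1:ℝ) else 0)
        + (∑ t : ZMod p, if g t = (0, 1) then (1/2 : ℝ) else 0)
        + (∑ t : ZMod p, if g t = (1, 0) then (1/2 : ℝ) else 0)
        - (∑ t : ZMod p, if g t = (0, 0) then (1/2 : ℝ) else 0)
        - (∑ t : ZMod p, if g t = (1, 1) then (1/2 : ℝ) else 0) := by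
    intro g
    simp only [hw2]
    rw [Finset.sum_sub_distrib, Finset.sum_sub_distrib, Finset.sum_add_distrib,
      Finset.sum_add_distrib]
  -- total sum
  have htotal : ∑ z : ZMod p × ZMod p, w z = p := by
    simp only [hw2]
    rw [Finset.sum_sub_distrib, Finset.sum_sub_distrib, Finset.sum_add_distrib,
      Finset.sum_add_distrib]
    have hdiag : ∑ z : ZMod p × ZMod p, (if z.1 = z.2 then (1:ℝ) else 0) = p := by
      rw [Fintype.sum_prod_type]
      simp [Finset.sum_ite_eq, ZMod.card]
    rw [hdiag]
    simp [Finset.sum_ite_eq']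
  refine ⟨?_, htotal, hp0, ?_⟩
  · -- support count
    have hsupp : Function.support w =
        (fun x : ZMod p => (x, x)) '' Set.univ ∪
          {((0:ZMod p), (1:ZMod p)), ((1:ZMod p), (0:ZMod p))} := by
      ext z
      simp only [Function.mem_support, Set.mem_union, Set.mem_image, Set.mem_univ, true_and,
        Set.mem_insert_iff, Set.mem_singleton_iff]
      rw [hw z]
      split_ifs with hsp hd
      · constructor
        · intro _
          rcases hsp with h | h | h | h
          · left; exact ⟨0, h.symm⟩
          · right; left; exact h
          · right; right; exact h
          · left; exact ⟨1, h.symm⟩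
        · intro _; norm_num
      · constructor
        · intro _
          left
          exact ⟨z.1, by rw [show ((z.1 : ZMod p), z.1) = (z.1, z.2) from by rw [hd]]⟩
        · intro _; norm_num
      · constructor
        · intro h; exact absurd rfl h
        · rintro (⟨x, rfl⟩ | rfl | rfl)
          · exact (hd rfl).elim
          · exact (hsp (Or.inr (Or.inl rfl))).elim
          · exact (hsp (Or.inr (Or.inr (Or.inl rfl)))).elim
    rw [hsupp]
    have hdisj : Disjoint ((fun x : ZMod p => (x, x)) '' Set.univ)
        ({((0:ZMod p), (1:ZMod p)), ((1:ZMod p), (0:ZMod p))} : Set (ZMod p × ZMod p)) := by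
      rw [Set.disjoint_left]
      rintro z ⟨x, -, rfl⟩ hz
      simp only [Set.mem_insert_iff, Set.mem_singleton_iff, Prod.mk.injEq] at hz
      rcases hz with ⟨h1, h2⟩ | ⟨h1, h2⟩
      · exact h01 (h1.symm.trans h2)
      · exact h01 (h2.symm.trans h1)
    rw [Set.ncard_union_eq hdisj (Set.toFinite _) (Set.toFinite _)]
    have hinj : Function.Injective (fun x : ZMod p => ((x : ZMod p), x)) := by
      intro x y hxy
      exact congrArg Prod.fst hxy
    rw [Set.ncard_image_of_injective _ hinj, Set.ncard_univ,
      Set.ncard_pair (by simp [Prod.ext_iff, h01]), Nat.card_zmod]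
  · -- perfect directions
    intro H hH
    constructor
    · intro hperf
      obtain ⟨v, hv0, hvspan⟩ := rank_one_gen H hH
      obtain ⟨v1, v2⟩ := v
      by_cases hv1 : v1 = 0
      · subst hv1
        right
        have hv2 : v2 ≠ 0 := fun h => hv0 (by simp [h, Prod.ext_iff])
        rw [hvspan, show ((0 : ZMod p), v2) = v2 • ((0:ZMod p), (1:ZMod p)) by
          simp [Prod.ext_iff]]
        exact Submodule.span_singleton_smul_eq (isUnit_iff_ne_zero.mpr hv2) _
      · obtain ⟨m, hm⟩ : ∃ m : ZMod p, m = v2 * v1⁻¹ := ⟨_, rfl⟩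
        have hnorm : H = Submodule.span (ZMod p) {((1:ZMod p), m)} := by
          rw [hvspan, show ((v1 : ZMod p), v2) = v1 • ((1:ZMod p), m) by
            have hmm : v1 * m = v2 := by rw [hm]; field_simp
            simp [Prod.ext_iff, hmm]]
          exact Submodule.span_singleton_smul_eq (isUnit_iff_ne_zero.mpr hv1) _
        by_cases hm0 : m = 0
        · left; rw [hnorm, hm0]
        · -- contradiction: H not perfect
          exfalso
          have hvm : ((1:ZMod p), m) ≠ 0 := fun h => h01.symm (congrArg Prod.fst h)
          have hline := hperf 0
          rw [hnorm] at hline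
          rw [span_sum _ hvm (fun z => w (0 + z)), htotal, div_self hp0,
            hsplit (fun t => (0 : ZMod p × ZMod p) + t • ((1:ZMod p), m))] at hline
          simp only [Prod.mk_zero_zero, zero_add, Prod.smul_mk, smul_eq_mul, mul_one,
            Prod.mk.injEq, Prod.mk_eq_zero, Prod.mk_eq_one] at hline
          by_cases hm1 : m = 1
          · subst hm1
            have d1 : ∑ t : ZMod p, (if t = t * 1 then (1:ℝ) else 0) = p := by
              simp [ZMod.card]
            have d2 : ∑ t : ZMod p, (if t = 0 ∧ t * 1 = 1 then (1/2:ℝ) else 0) = 0 := by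
              rw [sum_ite_iff _ (fun _ => False) ?_]
              · simp
              · intro t
                simp only [iff_false]
                rintro ⟨rfl, h⟩
                simp at h
            have d3 : ∑ t : ZMod p, (if t = 1 ∧ t * 1 = 0 then (1/2:ℝ) else 0) = 0 := by
              rw [sum_ite_iff _ (fun _ => False) ?_]
              · simp
              · intro t
                simp only [iff_false]
                rintro ⟨rfl, h⟩
                simp at h
            have d4 : ∑ t : ZMod p, (if t = 0 ∧ t * 1 = 0 then (1/2:ℝ) else 0) = 1/2 := by
              rw [sum_ite_iff _ (fun t => t = 0) ?_]
              · exact sum_pt 0 (1/2)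
              · intro t
                constructor
                · exact And.left
                · rintro rfl; simp
            have d5 : ∑ t : ZMod p, (if t = 1 ∧ t * 1 = 1 then (1/2:ℝ) else 0) = 1/2 := by
              rw [sum_ite_iff _ (fun t => t = 1) ?_]
              · exact sum_pt 1 (1/2)
              · intro t
                constructor
                · exact And.left
                · rintro rfl; simp
            rw [d1, d2, d3, d4, d5] at hline
            have hp5' : (5:ℝ) ≤ p := by exact_mod_cast hp5
            linarith
          · have d1 : ∑ t : ZMod p, (if t = t * m then (1:ℝ) else 0) = 1 := by
              rw [sum_ite_iff _ (fun t => t = 0) ?_]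
              · exact sum_pt 0 1
              · intro t
                constructor
                · intro h
                  have h2 : t * (1 - m) = 0 := by linear_combination h
                  rcases mul_eq_zero.mp h2 with h | h
                  · exact h
                  · exact absurd (by linear_combination -h : m = 1) hm1
                · rintro rfl; simp
            have d2 : ∑ t : ZMod p, (if t = 0 ∧ t * m = 1 then (1/2:ℝ) else 0) = 0 := by
              rw [sum_ite_iff _ (fun _ => False) ?_]
              · simp
              · intro t
                simp only [iff_false]
                rintro ⟨rfl, h⟩
                rw [zero_mul] at h
                exact h01 h
            have d3 : ∑ t : ZMod p, (if t = 1 ∧ t * m = 0 then (1/2:ℝ) else 0) = 0 := by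
              rw [sum_ite_iff _ (fun _ => False) ?_]
              · simp
              · intro t
                simp only [iff_false]
                rintro ⟨rfl, h⟩
                rw [one_mul] at h
                exact hm0 h
            have d4 : ∑ t : ZMod p, (if t = 0 ∧ t * m = 0 then (1/2:ℝ) else 0) = 1/2 := by
              rw [sum_ite_iff _ (fun t => t = 0) ?_]
              · exact sum_pt 0 (1/2)
              · intro t
                constructor
                · exact And.left
                · rintro rfl; simp
            have d5 : ∑ t : ZMod p, (if t = 1 ∧ t * m = 1 then (1/2:ℝ) else 0) = 0 := by
              rw [sum_ite_iff _ (fun _ => False) ?_]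
              · simp
              · intro t
                simp only [iff_false]
                rintro ⟨rfl, h⟩
                rw [one_mul] at h
                exact hm1 h
            rw [d1, d2, d3, d4, d5] at hline
            norm_num at hline
    · intro hH2
      have h10 : ((1:ZMod p), (0:ZMod p)) ≠ 0 := fun h => h01.symm (congrArg Prod.fst h)
      have h01v : ((0:ZMod p), (1:ZMod p)) ≠ 0 := fun h => h01.symm (congrArg Prod.snd h)
      rcases hH2 with rfl | rfl
      · intro a
        obtain ⟨a1, a2⟩ := a
        rw [span_sum _ h10 (fun z => w ((a1, a2) + z)), htotal, div_self hp0,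
          hsplit (fun t => ((a1 : ZMod p), a2) + t • ((1:ZMod p), (0:ZMod p)))]
        simp only [Prod.smul_mk, smul_eq_mul, mul_one, mul_zero, Prod.mk_add_mk, add_zero,
          Prod.mk.injEq]
        rw [sum_shift a1 a2 1, sum_shift_and a1 0 (a2 = 1) (1/2),
          sum_shift_and a1 1 (a2 = 0) (1/2), sum_shift_and a1 0 (a2 = 0) (1/2),
          sum_shift_and a1 1 (a2 = 1) (1/2)]
        ring
      · intro a
        obtain ⟨a1, a2⟩ := a
        rw [span_sum _ h01v (fun z => w ((a1, a2) + z)), htotal, div_self hp0,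
          hsplit (fun t => ((a1 : ZMod p), a2) + t • ((0:ZMod p), (1:ZMod p)))]
        simp only [Prod.smul_mk, smul_eq_mul, mul_one, mul_zero, Prod.mk_add_mk, add_zero,
          Prod.mk.injEq]
        rw [sum_shift' a2 a1 1, sum_and_shift a2 1 (a1 = 0) (1/2),
          sum_and_shift a2 0 (a1 = 1) (1/2), sum_and_shift a2 0 (a1 = 0) (1/2),
          sum_and_shift a2 1 (a1 = 1) (1/2)]
        ring
end

section
/- Let p be an odd prime and w : F_p^2 → ℝ a nonconstant function. Then there exist arbitrarily large positive integers Q and integer-valued functions w_Q : F_p^2 → ℤ with ‖w − w_Q/Q‖_∞ < 1/(2pQ); moreover for all sufficiently large such Q: supp(w_Q) = supp(w), w_Q(x) = w_Q(y) iff w(x) = w(y) for x,y in the support, and a direction is perfect with respect to w if and only if it is perfect with respect to w_Q. -/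
open scoped Classical

/-- Dirichlet simultaneous approximation with a lower bound on `Q`. -/
lemma dirichlet_sim {ι : Type*} [Fintype ι] (w : ι → ℝ) (n M : ℕ) (hn : 0 < n) (hM : 0 < M) :
    ∃ Q : ℕ, M ≤ Q ∧ 0 < Q ∧ ∃ g : ι → ℤ, ∀ z, |(Q : ℝ) * w z - g z| < 1 / n := by
  classical
  set d := Fintype.card ι with hd
  have hnR : (0 : ℝ) < n := by exact_mod_cast hn
  set f : Fin (n ^ d + 1) → (ι → Fin n) := fun j z =>
    ⟨⌊Int.fract ((j : ℕ) * M * w z) * n⌋₊, by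
      rw [Nat.floor_lt (mul_nonneg (Int.fract_nonneg _) hnR.le)]
      calc Int.fract ((j : ℕ) * M * w z) * n < 1 * n := by
            exact mul_lt_mul_of_pos_right (Int.fract_lt_one _) hnR
        _ = n := one_mul _⟩ with hf
  have hcard : Fintype.card (ι → Fin n) < Fintype.card (Fin (n ^ d + 1)) := by
    simp [Fintype.card_fun, ← hd]
  obtain ⟨j₁, j₂, hne, hfe⟩ := Fintype.exists_ne_map_eq_of_card_lt f hcard
  have key : ∀ j₁ j₂ : Fin (n ^ d + 1), j₁ < j₂ → f j₁ = f j₂ →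
      ∃ Q : ℕ, M ≤ Q ∧ 0 < Q ∧ ∃ g : ι → ℤ, ∀ z, |(Q : ℝ) * w z - g z| < 1 / n := by
    intro j₁ j₂ hlt hfe
    refine ⟨(j₂ : ℕ) * M - (j₁ : ℕ) * M, ?_, ?_, ?_⟩
    · have hl : (j₁ : ℕ) + 1 ≤ (j₂ : ℕ) := hlt
      have h2 : ((j₁ : ℕ) + 1) * M ≤ (j₂ : ℕ) * M := Nat.mul_le_mul_right M hl
      rw [add_mul, one_mul] at h2
      exact Nat.le_sub_of_add_le (by linarith)
    · have hl : (j₁ : ℕ) < (j₂ : ℕ) := hlt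
      have h2 : (j₁ : ℕ) * M < (j₂ : ℕ) * M := by
        exact Nat.mul_lt_mul_of_lt_of_le hl le_rfl hM
      omega
    · refine ⟨fun z => ⌊((j₂ : ℕ) * M : ℝ) * w z⌋ - ⌊((j₁ : ℕ) * M : ℝ) * w z⌋, fun z => ?_⟩
      have hle : (j₁ : ℕ) * M ≤ (j₂ : ℕ) * M := by
        apply Nat.mul_le_mul_right
        exact hlt.le
      have hcast : (((j₂ : ℕ) * M - (j₁ : ℕ) * M : ℕ) : ℝ)
          = ((j₂ : ℕ) * M : ℝ) - ((j₁ : ℕ) * M : ℝ) := by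
        push_cast [Nat.cast_sub hle]; ring
      have heq : ∀ z', ⌊Int.fract (((j₁ : ℕ) * M : ℝ) * w z') * n⌋₊
          = ⌊Int.fract (((j₂ : ℕ) * M : ℝ) * w z') * n⌋₊ := by
        intro z'
        have := congrFun hfe z'
        rw [hf] at this
        have := congrArg Fin.val this
        simpa using this
      have hfr : |Int.fract (((j₂ : ℕ) * M : ℝ) * w z)
          - Int.fract (((j₁ : ℕ) * M : ℝ) * w z)| < 1 / n := by
        set a := Int.fract (((j₂ : ℕ) * M : ℝ) * w z)
        set b := Int.fract (((j₁ : ℕ) * M : ℝ) * w z)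
        have ha0 : 0 ≤ a := Int.fract_nonneg _
        have hb0 : 0 ≤ b := Int.fract_nonneg _
        have hfl : ⌊b * n⌋₊ = ⌊a * n⌋₊ := heq z
        have h1 : |a * n - b * n| < 1 := by
          have h2 : (⌊a * n⌋₊ : ℝ) ≤ a * n := Nat.floor_le (by positivity)
          have h3 : (⌊b * n⌋₊ : ℝ) ≤ b * n := Nat.floor_le (by positivity)
          have h4 : a * n < ⌊a * n⌋₊ + 1 := Nat.lt_floor_add_one _
          have h5 : b * n < ⌊b * n⌋₊ + 1 := Nat.lt_floor_add_one _
          rw [abs_sub_lt_iff]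
          constructor <;> [skip; skip] <;> rw [hfl] at * <;> linarith
        rw [abs_sub_lt_iff] at h1 ⊢
        constructor <;> rw [lt_div_iff₀ hnR] <;> [linarith [h1.1]; linarith [h1.2]]
      have : (((j₂ : ℕ) * M - (j₁ : ℕ) * M : ℕ) : ℝ) * w z
          - ((⌊((j₂ : ℕ) * M : ℝ) * w z⌋ - ⌊((j₁ : ℕ) * M : ℝ) * w z⌋ : ℤ) : ℝ)
          = Int.fract (((j₂ : ℕ) * M : ℝ) * w z) - Int.fract (((j₁ : ℕ) * M : ℝ) * w z) := by
        rw [hcast]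
        unfold Int.fract
        push_cast
        ring
      rw [this]
      exact hfr
  rcases hne.lt_or_gt with h | h
  · exact key j₁ j₂ h hfe
  · exact key j₂ j₁ h hfe.symm


lemma exists_gap {α : Type*} [Fintype α] (f : α → ℝ) :
    ∃ ε : ℝ, 0 < ε ∧ ∀ a b, |f a - f b| < ε → f a = f b := by
  classical
  by_cases hne : ((Finset.univ.image (fun ab : α × α => |f ab.1 - f ab.2|)).filter
      (fun x => 0 < x)).Nonempty
  · refine ⟨_, (Finset.mem_filter.mp (Finset.min'_mem _ hne)).2, ?_⟩
    intro a b hlt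
    by_contra hab
    have h0 : 0 < |f a - f b| := abs_pos.mpr (sub_ne_zero.mpr hab)
    have hmem : |f a - f b| ∈ (Finset.univ.image
        (fun ab : α × α => |f ab.1 - f ab.2|)).filter (fun x => 0 < x) :=
      Finset.mem_filter.mpr ⟨Finset.mem_image.mpr ⟨(a, b), Finset.mem_univ _, rfl⟩, h0⟩
    exact absurd (Finset.min'_le _ _ hmem) (not_le.mpr hlt)
  · refine ⟨1, one_pos, fun a b _ => ?_⟩
    by_contra hab
    exact hne ⟨_, Finset.mem_filter.mpr ⟨Finset.mem_image.mpr ⟨(a, b), Finset.mem_univ _, rfl⟩,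
      abs_pos.mpr (sub_ne_zero.mpr hab)⟩⟩

section PerfectAux

variable {p : ℕ} [NeZero p]

lemma sum_lineSum (f : ZMod p × ZMod p → ℝ) (H : Submodule (ZMod p) (ZMod p × ZMod p)) :
    ∑ a : ZMod p × ZMod p, ∑ h : H, f (a + (h : ZMod p × ZMod p))
      = (Fintype.card H : ℝ) * ∑ z : ZMod p × ZMod p, f z := by
  rw [Finset.sum_comm]
  have key : ∀ h : H, ∑ a : ZMod p × ZMod p, f (a + (h : ZMod p × ZMod p))
      = ∑ z : ZMod p × ZMod p, f z := fun h =>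
    Fintype.sum_equiv (Equiv.addRight (h : ZMod p × ZMod p)) _ _ (fun a => rfl)
  rw [Finset.sum_congr rfl (fun h _ => key h), Finset.sum_const, Finset.card_univ,
    nsmul_eq_mul]

lemma isPerfect_iff_const (hp : p.Prime) (f : ZMod p × ZMod p → ℝ)
    (H : Submodule (ZMod p) (ZMod p × ZMod p)) (hH : Module.finrank (ZMod p) H = 1) :
    IsPerfect p f H ↔ ∀ a b : ZMod p × ZMod p,
      ∑ h : H, f (a + (h : ZMod p × ZMod p)) = ∑ h : H, f (b + (h : ZMod p × ZMod p)) := by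
  haveI := Fact.mk hp
  constructor
  · intro h a b; rw [h a, h b]
  · intro h a
    have hp0 : (p : ℝ) ≠ 0 := Nat.cast_ne_zero.mpr (NeZero.ne p)
    have hcardH : (Fintype.card H : ℝ) = p := by
      rw [Module.card_eq_pow_finrank (K := ZMod p) (V := H), hH, ZMod.card, pow_one]
    have hconst : ∑ a' : ZMod p × ZMod p, ∑ h : H, f (a' + (h : ZMod p × ZMod p))
        = ((p * p : ℕ) : ℝ) * ∑ h : H, f (a + (h : ZMod p × ZMod p)) := by
      rw [Finset.sum_congr rfl (fun a' _ => h a' a), Finset.sum_const, Finset.card_univ,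
        nsmul_eq_mul]
      congr 1
      rw [Fintype.card_prod, ZMod.card]
    have hsum := sum_lineSum f H
    rw [hconst, hcardH] at hsum
    push_cast at hsum
    have h2 : (p : ℝ) * ((p : ℝ) * ∑ h : H, f (a + (h : ZMod p × ZMod p)))
        = (p : ℝ) * ∑ z : ZMod p × ZMod p, f z := by linarith [hsum]
    have h3 := mul_left_cancel₀ hp0 h2
    rw [eq_div_iff hp0]
    linarith

lemma card_H_eq (hp : p.Prime) (H : Submodule (ZMod p) (ZMod p × ZMod p))
    (hH : Module.finrank (ZMod p) H = 1) : Fintype.card H = p := by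
  haveI := Fact.mk hp
  rw [Module.card_eq_pow_finrank (K := ZMod p) (V := H), hH, ZMod.card, pow_one]

end PerfectAux

theorem stmt15 (p : ℕ) (hp : p.Prime) (hodd : Odd p) [NeZero p]
    (w : ZMod p × ZMod p → ℝ) (hnc : ¬ ∃ c : ℝ, ∀ z, w z = c) :
    (∀ Q₀ : ℕ, ∃ Q : ℕ, Q₀ ≤ Q ∧ 0 < Q ∧ ∃ wQ : ZMod p × ZMod p → ℤ,
        ∀ z, |w z - (wQ z : ℝ) / Q| < 1 / (2 * p * Q)) ∧
    ∃ Q₁ : ℕ, ∀ Q : ℕ, Q₁ ≤ Q → ∀ wQ : ZMod p × ZMod p → ℤ,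
      (∀ z, |w z - (wQ z : ℝ) / Q| < 1 / (2 * p * Q)) →
        Function.support (fun z => (wQ z : ℝ)) = Function.support w ∧
        (∀ x ∈ Function.support w, ∀ y ∈ Function.support w,
          (wQ x = wQ y ↔ w x = w y)) ∧
        ∀ H : Submodule (ZMod p) (ZMod p × ZMod p), Module.finrank (ZMod p) H = 1 →
          (IsPerfect p w H ↔ IsPerfect p (fun z => (wQ z : ℝ)) H) := by
  have hppos : 0 < p := hp.pos
  have hpR : (0 : ℝ) < p := by exact_mod_cast hppos
  have hp1 : (1 : ℝ) ≤ p := by exact_mod_cast hppos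
  constructor
  · -- Part 1: Dirichlet
    intro Q₀
    obtain ⟨Q, hQM, hQpos, g, hg⟩ := dirichlet_sim w (2 * p + 1) (max Q₀ 1)
      (by omega) (by omega)
    have hQR : (0 : ℝ) < Q := by exact_mod_cast hQpos
    refine ⟨Q, le_trans (le_max_left _ _) hQM, hQpos, g, fun z => ?_⟩
    have h1 := hg z
    push_cast at h1
    have habs : |w z - (g z : ℝ) / Q| * Q = |(Q : ℝ) * w z - g z| := by
      rw [← abs_of_pos hQR, ← abs_mul]
      congr 1
      field_simp
      rw [abs_of_pos hQR]; ring
    have hlt : |w z - (g z : ℝ) / Q| * Q < 1 / (2 * (p : ℝ) + 1) := by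
      rw [habs]; exact h1
    rw [lt_div_iff₀ (by positivity : (0 : ℝ) < 2 * (p : ℝ) * Q)]
    have hkey : (2 * (p : ℝ)) * (1 / (2 * p + 1)) < 1 := by
      rw [mul_one_div, div_lt_one (by positivity)]
      linarith
    have hmul := mul_lt_mul_of_pos_left hlt (show (0 : ℝ) < 2 * (p : ℝ) by positivity)
    nlinarith [hmul, hkey, abs_nonneg (w z - (g z : ℝ) / Q)]
  · -- Part 2
    have hF : ∃ F : Finset (ZMod p × ZMod p) → ℝ, F = fun s => ∑ z ∈ s, w z :=
      ⟨_, rfl⟩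
    obtain ⟨F, hF⟩ := hF
    obtain ⟨ε, hεpos, hεkey⟩ := exists_gap F
    refine ⟨⌈1 / ε⌉₊ + 1, fun Q hQ1 wQ hwQ => ?_⟩
    have hQpos : 0 < Q := lt_of_lt_of_le (Nat.succ_pos _) hQ1
    have hQR : (0 : ℝ) < Q := by exact_mod_cast hQpos
    have hQε : 1 / (Q : ℝ) ≤ ε := by
      have h1 : (1 : ℝ) / ε ≤ ⌈1 / ε⌉₊ := Nat.le_ceil _
      have h2 : ((⌈1 / ε⌉₊ : ℝ) + 1) ≤ Q := by exact_mod_cast hQ1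
      rw [div_le_iff₀ hQR]
      rw [div_le_iff₀ hεpos] at h1
      nlinarith
    -- pointwise integer-scale bound
    have hptw : ∀ z, |(Q : ℝ) * w z - wQ z| < 1 / (2 * p) := by
      intro z
      have h1 := hwQ z
      have h2 : |(Q : ℝ) * w z - wQ z| = Q * |w z - wQ z / Q| := by
        rw [← abs_of_pos hQR, ← abs_mul]
        congr 1
        field_simp
        rw [abs_of_pos hQR]; ring
      rw [h2]
      calc (Q : ℝ) * |w z - wQ z / Q| < Q * (1 / (2 * p * Q)) :=
            mul_lt_mul_of_pos_left h1 hQR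
        _ = 1 / (2 * p) := by field_simp
    have h2p : (1 : ℝ) / (2 * p) ≤ 1 / 2 := by
      apply one_div_le_one_div_of_le
      · norm_num
      · have : (1 : ℝ) ≤ p := by exact_mod_cast hppos
        linarith
    -- support equality
    have hsupp : Function.support (fun z => (wQ z : ℝ)) = Function.support w := by
      ext z
      simp only [Function.mem_support]
      constructor
      · intro hz hwz
        apply hz
        have := hptw z
        rw [hwz, mul_zero, zero_sub, abs_neg] at this
        have h1 : |(wQ z : ℝ)| < 1 := by linarith
        have h2 : |wQ z| < 1 := by exact_mod_cast h1
        rw [abs_lt] at h2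
        have : wQ z = 0 := by omega
        rw [this]; norm_num
      · intro hz hwz
        -- w z ≠ 0 but wQ z = 0
        have hεle : ε ≤ |w z| := by
          by_contra hcon
          push_neg at hcon
          have : F {z} = F ∅ := hεkey {z} ∅ (by
            rw [hF]
            simp only [Finset.sum_singleton, Finset.sum_empty, sub_zero]
            exact hcon)
          rw [hF] at this
          simp only [Finset.sum_singleton, Finset.sum_empty] at this
          exact hz this
        have h1 := hwQ z
        rw [hwz] at h1
        simp only [zero_div, sub_zero] at h1
        have h3 : 1 / (2 * (p : ℝ) * Q) ≤ 1 / Q := by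
          apply one_div_le_one_div_of_le hQR
          nlinarith [mul_le_mul_of_nonneg_right hp1 hQR.le]
        linarith [le_trans (le_trans h3 hQε) hεle]
    refine ⟨hsupp, ?_, ?_⟩
    · -- value identification
      intro x hx y hy
      constructor
      · intro hxy
        have h1 := hwQ x
        have h2 := hwQ y
        have h3 : 1 / (2 * (p : ℝ) * Q) ≤ 1 / (2 * Q) := by
          apply one_div_le_one_div_of_le
          · positivity
          · have : (1 : ℝ) ≤ p := by exact_mod_cast hppos
            nlinarith
        have h4 : |w x - w y| < 1 / Q := by
          have : w x - w y = (w x - wQ x / Q) - (w y - wQ y / Q) := by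
            rw [hxy]; ring
          rw [this]
          calc |(w x - wQ x / Q) - (w y - wQ y / Q)|
              ≤ |w x - wQ x / Q| + |w y - wQ y / Q| := abs_sub _ _
            _ < 1 / (2 * Q) + 1 / (2 * Q) := by
                have := le_trans h1.le h3
                linarith [lt_of_lt_of_le h1 h3, lt_of_lt_of_le h2 h3]
            _ = 1 / Q := by
                ring
        have := hεkey {x} {y} (by
          rw [hF]
          simp only [Finset.sum_singleton]
          exact lt_of_lt_of_le h4 hQε)
        rw [hF] at this
        simpa using this
      · intro hxy
        have h1 := hptw x
        have h2 := hptw y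
        have h3 : |(wQ x : ℝ) - wQ y| < 1 := by
          have he : (wQ x : ℝ) - wQ y = ((Q : ℝ) * w y - wQ y) - ((Q : ℝ) * w x - wQ x) := by
            rw [hxy]; ring
          rw [he]
          calc |((Q : ℝ) * w y - wQ y) - ((Q : ℝ) * w x - wQ x)|
              ≤ |(Q : ℝ) * w y - wQ y| + |(Q : ℝ) * w x - wQ x| := abs_sub _ _
            _ < 1 / (2 * p) + 1 / (2 * p) := by linarith
            _ ≤ 1 := by linarith
        have h4 : |wQ x - wQ y| < 1 := by exact_mod_cast h3
        rw [abs_lt] at h4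
        omega
    · -- perfect directions
      intro H hH
      have hcardH : Fintype.card H = p := card_H_eq hp H hH
      have hHne : Nonempty H := ⟨0⟩
      -- line sum approximations
      have hline : ∀ a : ZMod p × ZMod p,
          |(Q : ℝ) * (∑ h : H, w (a + (h : ZMod p × ZMod p)))
            - (∑ h : H, (wQ (a + (h : ZMod p × ZMod p)) : ℝ))| < 1 / 2 := by
        intro a
        have h1 : (Q : ℝ) * (∑ h : H, w (a + (h : ZMod p × ZMod p)))
            - (∑ h : H, (wQ (a + (h : ZMod p × ZMod p)) : ℝ))
            = ∑ h : H, ((Q : ℝ) * w (a + (h : ZMod p × ZMod p))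
              - wQ (a + (h : ZMod p × ZMod p))) := by
          rw [Finset.sum_sub_distrib, Finset.mul_sum]
        rw [h1]
        calc |∑ h : H, ((Q : ℝ) * w (a + (h : ZMod p × ZMod p))
              - wQ (a + (h : ZMod p × ZMod p)))|
            ≤ ∑ h : H, |(Q : ℝ) * w (a + (h : ZMod p × ZMod p))
              - wQ (a + (h : ZMod p × ZMod p))| := Finset.abs_sum_le_sum_abs _ _
          _ < ∑ _h : H, (1 / (2 * (p : ℝ))) := by
              apply Finset.sum_lt_sum_of_nonempty
              · exact Finset.univ_nonempty
              · intro h _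
                exact hptw _
          _ = 1 / 2 := by
              rw [Finset.sum_const, Finset.card_univ, hcardH, nsmul_eq_mul]
              field_simp
        -- end
      -- integer value of line sums for wQ
      have hcastline : ∀ a : ZMod p × ZMod p,
          (∑ h : H, (wQ (a + (h : ZMod p × ZMod p)) : ℝ))
            = ((∑ h : H, wQ (a + (h : ZMod p × ZMod p)) : ℤ) : ℝ) := by
        intro a
        push_cast
        rfl
      -- line sums of w as subset sums
      have hFline : ∀ a : ZMod p × ZMod p,
          ∑ h : H, w (a + (h : ZMod p × ZMod p))
            = F (Finset.univ.image (fun h : H => a + (h : ZMod p × ZMod p))) := by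
        intro a
        rw [hF]
        refine (Finset.sum_image ?_).symm
        intro x _ y _ hxy
        exact Subtype.coe_injective (add_left_cancel hxy)
      rw [isPerfect_iff_const hp w H hH, isPerfect_iff_const hp _ H hH]
      constructor
      · intro hc a b
        have h1 := hline a
        have h2 := hline b
        have h3 := hc a b
        have h4 : |(∑ h : H, (wQ (a + (h : ZMod p × ZMod p)) : ℝ))
            - (∑ h : H, (wQ (b + (h : ZMod p × ZMod p)) : ℝ))| < 1 := by
          have he : (∑ h : H, (wQ (a + (h : ZMod p × ZMod p)) : ℝ))
              - (∑ h : H, (wQ (b + (h : ZMod p × ZMod p)) : ℝ))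
              = ((Q : ℝ) * (∑ h : H, w (b + (h : ZMod p × ZMod p)))
                - (∑ h : H, (wQ (b + (h : ZMod p × ZMod p)) : ℝ)))
              - ((Q : ℝ) * (∑ h : H, w (a + (h : ZMod p × ZMod p)))
                - (∑ h : H, (wQ (a + (h : ZMod p × ZMod p)) : ℝ))) := by
            rw [h3]; ring
          rw [he]
          exact lt_of_le_of_lt (abs_sub _ _) (by linarith)
        rw [hcastline a, hcastline b] at h4
        rw [← Int.cast_sub] at h4
        have h5 : |(∑ h : H, wQ (a + (h : ZMod p × ZMod p)))
            - (∑ h : H, wQ (b + (h : ZMod p × ZMod p)))| < 1 := by exact_mod_cast h4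
        rw [abs_lt] at h5
        have h6 : (∑ h : H, wQ (a + (h : ZMod p × ZMod p)))
            = (∑ h : H, wQ (b + (h : ZMod p × ZMod p))) := by omega
        rw [hcastline a, hcastline b, h6]
      · intro hc a b
        have h1 := hline a
        have h2 := hline b
        have h3 := hc a b
        have h4 : |(∑ h : H, w (a + (h : ZMod p × ZMod p)))
            - (∑ h : H, w (b + (h : ZMod p × ZMod p)))| < 1 / Q := by
          have he : (Q : ℝ) * ((∑ h : H, w (a + (h : ZMod p × ZMod p)))
              - (∑ h : H, w (b + (h : ZMod p × ZMod p))))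
              = ((Q : ℝ) * (∑ h : H, w (a + (h : ZMod p × ZMod p)))
                - (∑ h : H, (wQ (a + (h : ZMod p × ZMod p)) : ℝ)))
              - ((Q : ℝ) * (∑ h : H, w (b + (h : ZMod p × ZMod p)))
                - (∑ h : H, (wQ (b + (h : ZMod p × ZMod p)) : ℝ))) := by
            rw [h3]; ring
          have h5 : |(Q : ℝ) * ((∑ h : H, w (a + (h : ZMod p × ZMod p)))
              - (∑ h : H, w (b + (h : ZMod p × ZMod p))))| < 1 := by
            rw [he]
            exact lt_of_le_of_lt (abs_sub _ _) (by linarith)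
          rw [abs_mul, abs_of_pos hQR] at h5
          rw [lt_div_iff₀ hQR]
          linarith [h5]
        rw [hFline a, hFline b] at h4 ⊢
        exact hεkey _ _ (lt_of_lt_of_le h4 hQε)
end

section
/- Let p ≥ 5 be prime, and let w : F_p^2 → ℚ satisfy (1/2)|supp w| + (1/(p−1))|supp ŵ| ≥ p+1, where ŵ is the Fourier transform. If N is the number of perfect directions with respect to w, then N ≤ |supp w|/2. -/
open scoped Classical

section Aux

variable (p : ℕ) [NeZero p]

/-- The dot-product homomorphism `z ↦ a ⬝ z` on `F_p²`. -/
def dotHom (a : ZMod p × ZMod p) : (ZMod p × ZMod p) →+ ZMod p where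
  toFun z := a.1 * z.1 + a.2 * z.2
  map_zero' := by simp
  map_add' x y := by simp [mul_add]; ring

/-- The additive character `z ↦ e(a ⬝ z / p)` of `F_p²`. -/
noncomputable def chi (a : ZMod p × ZMod p) : AddChar (ZMod p × ZMod p) ℂ :=
  (ZMod.stdAddChar (N := p)).compAddMonoidHom (dotHom p a)

lemma chi_apply (a z : ZMod p × ZMod p) :
    chi p a z = ZMod.stdAddChar (a.1 * z.1 + a.2 * z.2) := rfl

lemma chi_inj : Function.Injective (chi p) := by
  intro a b h
  have h1 := DFunLike.congr_fun h (1, 0)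
  have h2 := DFunLike.congr_fun h (0, 1)
  simp only [chi_apply, mul_one, mul_zero, add_zero, zero_add] at h1 h2
  exact Prod.ext (ZMod.injective_stdAddChar h1) (ZMod.injective_stdAddChar h2)

lemma chi_zero : chi p 0 = 1 := by
  ext z
  simp [chi_apply]

lemma chi_ne_one {a : ZMod p × ZMod p} (ha : a ≠ 0) : chi p a ≠ 1 := fun h =>
  ha (chi_inj p (h.trans (chi_zero p).symm))

lemma chi_trivial_on (v : ZMod p × ZMod p) (c : ZMod p) (h : ZMod p × ZMod p)
    (hh : h ∈ Submodule.span (ZMod p) {v}) :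
    chi p (c • (-v.2, v.1)) h = 1 := by
  obtain ⟨t, rfl⟩ := Submodule.mem_span_singleton.mp hh
  rw [chi_apply]
  have h0 : (c • ((-v.2, v.1) : ZMod p × ZMod p)).1 * (t • v).1
      + (c • ((-v.2, v.1) : ZMod p × ZMod p)).2 * (t • v).2 = 0 := by
    simp [smul_eq_mul]; ring
  rw [h0, AddChar.map_zero_eq_one]

lemma ft_vanish (hp : p.Prime) (w : ZMod p × ZMod p → ℚ)
    (H : Submodule (ZMod p) (ZMod p × ZMod p))
    (hperf : IsPerfect p (fun z => (w z : ℝ)) H)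
    (χ : AddChar (ZMod p × ZMod p) ℂ) (hχ : χ ≠ 1)
    (hχH : ∀ h ∈ H, χ h = 1) :
    ft p (fun z => (w z : ℂ)) χ = 0 := by
  haveI := Fact.mk hp
  obtain ⟨K, hK⟩ := Submodule.exists_isCompl H
  set e := Submodule.prodEquivOfIsCompl H K hK with he
  have hsum : ∑ z : ZMod p × ZMod p, (w z : ℂ) * (starRingEnd ℂ) (χ z)
      = ∑ x : H × K, (w ((x.1 : ZMod p × ZMod p) + (x.2 : ZMod p × ZMod p)) : ℂ)
          * (starRingEnd ℂ) (χ ((x.1 : ZMod p × ZMod p) + (x.2 : ZMod p × ZMod p))) := by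
    refine (Fintype.sum_equiv e.toEquiv _ _ fun x => ?_).symm
    rw [he]
    simp [Submodule.coe_prodEquivOfIsCompl']
  have hTC : ∀ k : ZMod p × ZMod p, ∑ h : H, (w (k + (h : ZMod p × ZMod p)) : ℂ)
      = (((∑ z : ZMod p × ZMod p, (w z : ℝ)) / p : ℝ) : ℂ) := by
    intro k
    have := congrArg Complex.ofReal (hperf k)
    push_cast at this ⊢
    simpa using this
  have hKchar : ∑ k : K, χ (k : ZMod p × ZMod p) = 0 := by
    have hne : χ.compAddMonoidHom K.subtype.toAddMonoidHom ≠ 0 := by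
      intro h0
      apply hχ
      ext z
      have hz : z ∈ H ⊔ K := by rw [hK.sup_eq_top]; trivial
      obtain ⟨x, hx, y, hy, rfl⟩ := Submodule.mem_sup.mp hz
      have hy1 : χ y = 1 := by
        have := DFunLike.congr_fun h0 ⟨y, hy⟩
        simpa using this
      simp [AddChar.map_add_eq_mul, hχH _ hx, hy1]
    have := AddChar.sum_eq_zero_iff_ne_zero.mpr hne
    simpa using this
  unfold ft
  rw [hsum]
  have hmain : ∑ x : H × K, (w ((x.1 : ZMod p × ZMod p) + (x.2 : ZMod p × ZMod p)) : ℂ)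
          * (starRingEnd ℂ) (χ ((x.1 : ZMod p × ZMod p) + (x.2 : ZMod p × ZMod p))) = 0 := by
    rw [Fintype.sum_prod_type_right]
    have hterm : ∀ (k : K) (h : H),
        (w ((h : ZMod p × ZMod p) + (k : ZMod p × ZMod p)) : ℂ)
          * (starRingEnd ℂ) (χ ((h : ZMod p × ZMod p) + (k : ZMod p × ZMod p)))
        = (w ((k : ZMod p × ZMod p) + (h : ZMod p × ZMod p)) : ℂ)
          * (starRingEnd ℂ) (χ (k : ZMod p × ZMod p)) := by
      intro k h
      rw [add_comm ((h : ZMod p × ZMod p)) ((k : ZMod p × ZMod p)),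
        AddChar.map_add_eq_mul, hχH _ h.2, mul_one]
    calc ∑ k : K, ∑ h : H, (w ((h : ZMod p × ZMod p) + (k : ZMod p × ZMod p)) : ℂ)
          * (starRingEnd ℂ) (χ ((h : ZMod p × ZMod p) + (k : ZMod p × ZMod p)))
        = ∑ k : K, (∑ h : H, (w ((k : ZMod p × ZMod p) + (h : ZMod p × ZMod p)) : ℂ))
            * (starRingEnd ℂ) (χ (k : ZMod p × ZMod p)) := by
          refine Finset.sum_congr rfl fun k _ => ?_
          rw [Finset.sum_mul]
          exact Finset.sum_congr rfl fun h _ => hterm k h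
      _ = ∑ k : K, (((∑ z : ZMod p × ZMod p, (w z : ℝ)) / p : ℝ) : ℂ)
            * (starRingEnd ℂ) (χ (k : ZMod p × ZMod p)) := by
          refine Finset.sum_congr rfl fun k _ => ?_
          rw [hTC]
      _ = (((∑ z : ZMod p × ZMod p, (w z : ℝ)) / p : ℝ) : ℂ)
            * (starRingEnd ℂ) (∑ k : K, χ (k : ZMod p × ZMod p)) := by
          rw [map_sum, Finset.mul_sum]
      _ = 0 := by rw [hKchar]; simp
  rw [hmain, mul_zero]

lemma span_eq_of_finrank_one (hp : p.Prime)
    (H : Submodule (ZMod p) (ZMod p × ZMod p))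
    (hH : Module.finrank (ZMod p) H = 1) :
    ∃ v : ZMod p × ZMod p, v ≠ 0 ∧ H = Submodule.span (ZMod p) {v} := by
  haveI := Fact.mk hp
  have hbot : H ≠ ⊥ := by
    intro h
    rw [h] at hH
    simp at hH
  obtain ⟨v, hvH, hv0⟩ := Submodule.exists_mem_ne_zero_of_ne_bot hbot
  refine ⟨v, hv0, ?_⟩
  have hle : Submodule.span (ZMod p) {v} ≤ H := Submodule.span_le.mpr (by simpa)
  exact (Submodule.eq_of_le_of_finrank_le hle
    (by rw [hH, finrank_span_singleton hv0])).symm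

lemma char_trivial_unique_dir (hp : p.Prime)
    (H H' : Submodule (ZMod p) (ZMod p × ZMod p))
    (h1 : Module.finrank (ZMod p) H = 1) (h1' : Module.finrank (ZMod p) H' = 1)
    (χ : AddChar (ZMod p × ZMod p) ℂ) (hχ : χ ≠ 1)
    (hH : ∀ h ∈ H, χ h = 1) (hH' : ∀ h ∈ H', χ h = 1) : H = H' := by
  haveI := Fact.mk hp
  by_contra hne
  have hsub : ¬ H' ≤ H := by
    intro hle
    exact hne (Submodule.eq_of_le_of_finrank_le hle (by rw [h1, h1'])).symm
  have hlt : H < H ⊔ H' := lt_of_le_of_ne le_sup_left (by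
    intro h
    apply hsub
    rw [h]
    exact le_sup_right)
  have h2 : Module.finrank (ZMod p) (ZMod p × ZMod p) = 2 := by
    rw [Module.finrank_prod, Module.finrank_self]
  have htop : H ⊔ H' = ⊤ := by
    apply Submodule.eq_top_of_finrank_eq
    have hgt := Submodule.finrank_lt_finrank_of_lt hlt
    have hle2 := Submodule.finrank_le (H ⊔ H')
    omega
  apply hχ
  ext z
  have hz : z ∈ H ⊔ H' := htop ▸ Submodule.mem_top
  obtain ⟨x, hx, y, hy, rfl⟩ := Submodule.mem_sup.mp hz
  simp [AddChar.map_add_eq_mul, hH _ hx, hH' _ hy]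

end Aux

theorem stmt17 (p : ℕ) (hp : p.Prime) (hp5 : 5 ≤ p) [NeZero p]
    (w : ZMod p × ZMod p → ℚ)
    (hineq : (1 / 2 : ℝ) * (Function.support w).ncard +
        (1 / ((p : ℝ) - 1)) *
          {χ : AddChar (ZMod p × ZMod p) ℂ |
            ft p (fun z => (w z : ℂ)) χ ≠ 0}.ncard ≥ p + 1)
    (N : ℕ)
    (hN : N = Nat.card {H : Submodule (ZMod p) (ZMod p × ZMod p) //
      Module.finrank (ZMod p) H = 1 ∧ IsPerfect p (fun z => (w z : ℝ)) H}) :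
    2 * N ≤ (Function.support w).ncard := by
  classical
  haveI := Fact.mk hp
  -- the perfect directions
  have hex : ∀ H : {H : Submodule (ZMod p) (ZMod p × ZMod p) //
      Module.finrank (ZMod p) H = 1 ∧ IsPerfect p (fun z => (w z : ℝ)) H},
      ∃ v : ZMod p × ZMod p, v ≠ 0 ∧ (H : Submodule (ZMod p) (ZMod p × ZMod p))
        = Submodule.span (ZMod p) {v} :=
    fun H => span_eq_of_finrank_one p hp H.1 H.2.1
  choose v hv0 hvspan using hex
  have hperp : ∀ H, ((-(v H).2, (v H).1) : ZMod p × ZMod p) ≠ 0 := by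
    intro H h
    apply hv0 H
    rw [Prod.ext_iff] at h ⊢
    simp only [Prod.fst_zero, Prod.snd_zero, neg_eq_zero] at h ⊢
    exact ⟨h.2, h.1⟩
  have harg : ∀ H (c : {c : ZMod p // c ≠ 0}),
      (c.1 • ((-(v H).2, (v H).1) : ZMod p × ZMod p)) ≠ 0 :=
    fun H c => smul_ne_zero c.2 (hperp H)
  have htriv : ∀ H (c : {c : ZMod p // c ≠ 0}) (h : ZMod p × ZMod p), h ∈ H.1 →
      chi p (c.1 • ((-(v H).2, (v H).1))) h = 1 := by
    intro H c h hh
    exact chi_trivial_on p (v H) c.1 h (by rw [← hvspan H]; exact hh)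
  have hzero : ∀ H (c : {c : ZMod p // c ≠ 0}),
      ft p (fun z => (w z : ℂ)) (chi p (c.1 • ((-(v H).2, (v H).1)))) = 0 := by
    intro H c
    exact ft_vanish p hp w H.1 H.2.2 _ (chi_ne_one p (harg H c)) (htriv H c)
  let f : {H : Submodule (ZMod p) (ZMod p × ZMod p) //
        Module.finrank (ZMod p) H = 1 ∧ IsPerfect p (fun z => (w z : ℝ)) H}
      × {c : ZMod p // c ≠ 0} →
      {χ : AddChar (ZMod p × ZMod p) ℂ // ft p (fun z => (w z : ℂ)) χ = 0} :=
    fun x => ⟨chi p (x.2.1 • ((-(v x.1).2, (v x.1).1))), hzero x.1 x.2⟩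
  have hfinj : Function.Injective f := by
    rintro ⟨H, c⟩ ⟨H', c'⟩ h
    have hchi : chi p (c.1 • ((-(v H).2, (v H).1)))
        = chi p (c'.1 • ((-(v H').2, (v H').1))) := congrArg Subtype.val h
    have hHH' : H = H' := by
      apply Subtype.ext
      refine char_trivial_unique_dir p hp H.1 H'.1 H.2.1 H'.2.1 _
        (chi_ne_one p (harg H c)) (htriv H c) ?_
      intro h hh
      rw [hchi]
      exact htriv H' c' h hh
    subst hHH'
    have hargs := chi_inj p hchi
    have hsub : (c.1 - c'.1) • ((-(v H).2, (v H).1) : ZMod p × ZMod p) = 0 := by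
      rw [sub_smul, hargs, sub_self]
    have hc : c.1 = c'.1 := by
      rcases smul_eq_zero.mp hsub with h0 | h0
      · exact sub_eq_zero.mp h0
      · exact absurd h0 (hperp H)
    rw [Prod.ext_iff]
    exact ⟨rfl, Subtype.ext hc⟩
  -- counting
  have hcardc : Nat.card {c : ZMod p // c ≠ 0} = p - 1 := by
    simp [Nat.card_eq_fintype_card, Fintype.card_subtype_compl, ZMod.card]
  have hcard : N * (p - 1) ≤ Nat.card {χ : AddChar (ZMod p × ZMod p) ℂ //
      ft p (fun z => (w z : ℂ)) χ = 0} := by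
    have h1 := Nat.card_le_card_of_injective f hfinj
    rwa [Nat.card_prod, hcardc, ← hN] at h1
  have htotal : Nat.card (AddChar (ZMod p × ZMod p) ℂ) = p ^ 2 := by
    rw [Nat.card_eq_fintype_card, AddChar.card_eq, Fintype.card_prod, ZMod.card]
    ring
  have hcompl : {χ : AddChar (ZMod p × ZMod p) ℂ | ft p (fun z => (w z : ℂ)) χ ≠ 0}ᶜ
      = {χ : AddChar (ZMod p × ZMod p) ℂ | ft p (fun z => (w z : ℂ)) χ = 0} := by
    ext χ; simp
  have hzcard : Nat.card {χ : AddChar (ZMod p × ZMod p) ℂ //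
      ft p (fun z => (w z : ℂ)) χ = 0}
      = {χ : AddChar (ZMod p × ZMod p) ℂ | ft p (fun z => (w z : ℂ)) χ = 0}.ncard := rfl
  have hsplit : {χ : AddChar (ZMod p × ZMod p) ℂ | ft p (fun z => (w z : ℂ)) χ ≠ 0}.ncard
      + {χ : AddChar (ZMod p × ZMod p) ℂ | ft p (fun z => (w z : ℂ)) χ = 0}.ncard
      = p ^ 2 := by
    rw [← hcompl]
    exact (Set.ncard_add_ncard_compl _).trans htotal
  have hkey : N * (p - 1)
      + {χ : AddChar (ZMod p × ZMod p) ℂ | ft p (fun z => (w z : ℂ)) χ ≠ 0}.ncard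
      ≤ p ^ 2 := by
    rw [hzcard] at hcard
    omega
  -- final arithmetic over ℝ
  by_contra hcon
  push_neg at hcon
  have hs1 : ((Function.support w).ncard : ℝ) + 1 ≤ 2 * N := by
    have : (Function.support w).ncard + 1 ≤ 2 * N := hcon
    exact_mod_cast this
  have hkeyR : (N : ℝ) * ((p : ℝ) - 1)
      + ({χ : AddChar (ZMod p × ZMod p) ℂ | ft p (fun z => (w z : ℂ)) χ ≠ 0}.ncard : ℝ)
      ≤ (p : ℝ) ^ 2 := by
    have hp1 : 1 ≤ p := hp.one_lt.le
    have := hkey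
    have h2 : ((N * (p - 1)
        + {χ : AddChar (ZMod p × ZMod p) ℂ | ft p (fun z => (w z : ℂ)) χ ≠ 0}.ncard : ℕ) : ℝ)
        ≤ ((p ^ 2 : ℕ) : ℝ) := by exact_mod_cast this
    push_cast [Nat.cast_sub hp1] at h2
    linarith
  have hP : (5 : ℝ) ≤ (p : ℝ) := by exact_mod_cast hp5
  have hq : (0 : ℝ) < (p : ℝ) - 1 := by linarith
  set Mr : ℝ := ({χ : AddChar (ZMod p × ZMod p) ℂ | ft p (fun z => (w z : ℂ)) χ ≠ 0}.ncard : ℝ)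
  set sr : ℝ := ((Function.support w).ncard : ℝ)
  have hmul := mul_le_mul_of_nonneg_left hineq hq.le
  have hsimp : ((p : ℝ) - 1) * ((1 / 2 : ℝ) * sr + (1 / ((p : ℝ) - 1)) * Mr)
      = ((p : ℝ) - 1) * sr / 2 + Mr := by
    field_simp
  rw [hsimp] at hmul
  nlinarith [mul_le_mul_of_nonneg_left hs1 hq.le, hmul, hkeyR, hs1, hq, hP]
end
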